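/- arXiv:2305.13125 — 3 statements merged into one kernel-verified Lean document; each statement's English description precedes it below -/
import Mathlib

section
/- Let E be a Banach space with a normalized 1-unconditional basis (𝐞_i), let 𝓕 be a combinatorial family, and let A ∈ 𝓕̄ (the closure of 𝓕 in {0,1}^ℕ). Then ‖Λ𝐱‖_{X_{𝓕,E}} = ‖𝐱‖_E for every 𝐱 ∈ E supported on A, and ‖x*‖_{X_{𝓕,E}^*} = ‖𝐱*‖_{E*} for every x* ∈ X_{𝓕,E}^* supported on A. -/
open Filter Topology NormedSpace

noncomputable section

/-- A combinatorial family: a family of finite subsets of `ℕ` containing all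
singletons and hereditary for inclusion. -/
def IsCombFamily (𝓕 : Set (Finset ℕ)) : Prop :=
  (∀ n : ℕ, ({n} : Finset ℕ) ∈ 𝓕) ∧ ∀ F ∈ 𝓕, ∀ G : Finset ℕ, G ⊆ F → G ∈ 𝓕

/-- A family of finite subsets of `ℕ` is compact if it is closed in `{0,1}^ℕ`,
identifying sets with their characteristic functions. -/
def IsCompactFamily (𝓕 : Set (Finset ℕ)) : Prop :=
  IsClosed {f : ℕ → Bool | ∃ F ∈ 𝓕, ∀ n, f n = true ↔ n ∈ F}

/-- The closure of the family `𝓕` in `{0,1}^ℕ`: all sets every finite subset of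
which belongs to `𝓕`. -/
def famClosure (𝓕 : Set (Finset ℕ)) : Set (Set ℕ) :=
  {A | ∀ G : Finset ℕ, ↑G ⊆ A → G ∈ 𝓕}

/-- Maximal elements of a family. -/
def famMax (𝓕 : Set (Finset ℕ)) : Set (Finset ℕ) :=
  {F | F ∈ 𝓕 ∧ ∀ G ∈ 𝓕, F ⊆ G → F = G}

/-- A spreading family. -/
def IsSpreading (𝓕 : Set (Finset ℕ)) : Prop :=
  ∀ F ∈ 𝓕, ∀ σ : ℕ → ℕ, (∀ n ∈ F, n ≤ σ n) → Finset.image σ F ∈ 𝓕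

/-- `X`, with distinguished sequence `e`, is (a realization of) the `p`-convexification
`X_{𝓕,p}` of the combinatorial Banach space associated with `𝓕`: the canonical vectors
have dense linear span, and finitely supported vectors have the norm
`sup { (∑_{i∈F} |a i|^p)^{1/p} : F ∈ 𝓕 }`. -/
structure IsXFp (𝕜 : Type*) [RCLike 𝕜] (𝓕 : Set (Finset ℕ)) (p : ℝ)
    (X : Type*) [NormedAddCommGroup X] [NormedSpace 𝕜 X] (e : ℕ → X) : Prop where
  dense_span : Dense (Submodule.span 𝕜 (Set.range e) : Set X)
  norm_eq : ∀ a : ℕ →₀ 𝕜,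
    ‖∑ i ∈ a.support, a i • e i‖ =
      sSup {r : ℝ | ∃ F ∈ 𝓕, r = (∑ i ∈ F, ‖a i‖ ^ p) ^ (1 / p)}

/-- `(b, bs)` is a normalized 1-unconditional Schauder basis of `E` together with its
coordinate functionals. -/
structure IsNUBasis (𝕜 : Type*) [RCLike 𝕜] (E : Type*)
    [NormedAddCommGroup E] [NormedSpace 𝕜 E]
    (b : ℕ → E) (bs : ℕ → StrongDual 𝕜 E) : Prop where
  biortho : ∀ i j, bs i (b j) = if i = j then 1 else 0
  normalized : ∀ i, ‖b i‖ = 1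
  expansion : ∀ x : E,
    Tendsto (fun N => ∑ i ∈ Finset.range N, bs i x • b i) atTop (nhds x)
  unconditional : ∀ a : ℕ →₀ 𝕜, ∀ ω : ℕ → 𝕜, (∀ i, ‖ω i‖ = 1) →
    ‖∑ i ∈ a.support, ω i • a i • b i‖ = ‖∑ i ∈ a.support, a i • b i‖

/-- `X`, with distinguished sequence `e`, is (a realization of) `X_{𝓕,E}`. -/
structure IsXFE (𝕜 : Type*) [RCLike 𝕜] (𝓕 : Set (Finset ℕ))
    (E : Type*) [NormedAddCommGroup E] [NormedSpace 𝕜 E] (b : ℕ → E)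
    (X : Type*) [NormedAddCommGroup X] [NormedSpace 𝕜 X] (e : ℕ → X) : Prop where
  dense_span : Dense (Submodule.span 𝕜 (Set.range e) : Set X)
  norm_eq : ∀ a : ℕ →₀ 𝕜,
    ‖∑ i ∈ a.support, a i • e i‖ =
      sSup {r : ℝ | ∃ F ∈ 𝓕, r = ‖∑ i ∈ F, a i • b i‖}

/-- A normed space is strictly convex if its unit sphere contains no nontrivial
segments. -/
def IsStrictlyConvexSp (Y : Type*) [NormedAddCommGroup Y] : Prop :=
  ∀ u v : Y, ‖u‖ = 1 → ‖v‖ = 1 → u ≠ v → ‖u + v‖ < 2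

/-- `x` is an extreme point of the closed unit ball of `Y`. -/
def IsExtremePtBall {Y : Type*} [NormedAddCommGroup Y] (x : Y) : Prop :=
  ‖x‖ ≤ 1 ∧ ∀ u v : Y, ‖u‖ ≤ 1 → ‖v‖ ≤ 1 → u + v = x + x → u = x ∧ v = x

/-- `x` is an extreme point of the closed unit ball of the subspace `M`. -/
def IsExtremePtBallIn {𝕜 Y : Type*} [RCLike 𝕜] [NormedAddCommGroup Y] [NormedSpace 𝕜 Y]
    (M : Submodule 𝕜 Y) (x : Y) : Prop :=
  x ∈ M ∧ ‖x‖ ≤ 1 ∧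
    ∀ u v : Y, u ∈ M → v ∈ M → ‖u‖ ≤ 1 → ‖v‖ ≤ 1 → u + v = x + x → u = x ∧ v = x

/-- The basis `b` is strictly 1-unconditional. -/
def StrictlyUnconditional (𝕜 : Type*) [RCLike 𝕜] {E : Type*}
    [NormedAddCommGroup E] [NormedSpace 𝕜 E] (b : ℕ → E) : Prop :=
  ∀ a c : ℕ →₀ 𝕜, (∀ i, ‖a i‖ ≤ ‖c i‖) → (∃ i, ‖a i‖ < ‖c i‖) →
    ‖∑ i ∈ c.support, a i • b i‖ < ‖∑ i ∈ c.support, c i • b i‖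

/-- The basis `b` is 1-symmetric: every permutation of `ℕ` induces a surjective
linear isometry of `E` permuting the basis vectors. -/
def IsSymmetricBasis (𝕜 : Type*) [RCLike 𝕜] {E : Type*}
    [NormedAddCommGroup E] [NormedSpace 𝕜 E] (b : ℕ → E) : Prop :=
  ∀ σ : Equiv.Perm ℕ, ∃ T : E ≃ₗᵢ[𝕜] E, ∀ i, T (b i) = b (σ i)

/-- Condition (H): for `j ≠ k`, any linear isometric embedding of `span(bs j, bs k)`
into the dual of `E` sends `bs j` and `bs k` to functionals with disjoint supports. -/
def CondH (𝕜 : Type*) [RCLike 𝕜] {E : Type*} [NormedAddCommGroup E] [NormedSpace 𝕜 E]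
    (b : ℕ → E) (bs : ℕ → StrongDual 𝕜 E) : Prop :=
  ∀ j k : ℕ, j ≠ k →
    ∀ T : ↥(Submodule.span 𝕜 {bs j, bs k}) →ₗᵢ[𝕜] StrongDual 𝕜 E,
      ∀ i : ℕ,
        T ⟨bs j, Submodule.subset_span (Set.mem_insert _ _)⟩ (b i) = 0 ∨
        T ⟨bs k, Submodule.subset_span (Set.mem_insert_of_mem _ rfl)⟩ (b i) = 0

/-- `span(u,v)` is isometrically equal to `ℓ₂(2)`. -/
def SpanIsL2 (𝕜 : Type*) [RCLike 𝕜] {Y : Type*} [NormedAddCommGroup Y] [NormedSpace 𝕜 Y]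
    (u v : Y) : Prop :=
  ∀ a c : 𝕜, ‖a • u + c • v‖ ^ 2 = ‖a‖ ^ 2 + ‖c‖ ^ 2

/-! The basis being 1-unconditional, coordinate projections have norm at most one, so the
norm of `X_{𝓕,E}` (a supremum of norms of projections onto sets of `𝓕`) is dominated by the
norm of `E`, and the partial sums of `∑ ⟨𝐞_i^*, 𝐱⟩ e_i` are Cauchy in `X_{𝓕,E}`. Every finite
subset of `A` lies in `𝓕`, so on vectors supported on `A` the two norms agree. For the dual
statement, `𝐱* = x* ∘ Λ` has norm at most `‖x*‖`; conversely a finitely supported `z` is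
seen by `x*` only through its restriction to `A`, whose norm in `E` is at most `‖z‖`. -/

lemma sum_support_indicator_smul {ι 𝕜 M : Type*} [Semiring 𝕜] [AddCommMonoid M] [Module 𝕜 M]
    (t : Finset ι) (g : ι → 𝕜) (v : ι → M) :
    ∑ i ∈ (Finsupp.indicator t fun i _ => g i).support,
        (Finsupp.indicator t fun i _ => g i) i • v i = ∑ i ∈ t, g i • v i :=
  Finsupp.sum_indicator_index (h := fun i c => c • v i) _ fun _ _ => zero_smul _ _

lemma ContinuousLinearMap.opNorm_le_bound_of_dense {𝕜 X Y : Type*} [RCLike 𝕜]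
    [NormedAddCommGroup X] [NormedSpace 𝕜 X] [NormedAddCommGroup Y] [NormedSpace 𝕜 Y]
    (f : X →L[𝕜] Y) {s : Set X} (hs : Dense s) {C : ℝ} (hC : 0 ≤ C)
    (h : ∀ z ∈ s, ‖f z‖ ≤ C * ‖z‖) : ‖f‖ ≤ C :=
  f.opNorm_le_bound hC <| hs.induction h <|
    isClosed_le (continuous_norm.comp f.continuous) (continuous_const.mul continuous_norm)

namespace IsNUBasis

variable {𝕜 : Type*} [RCLike 𝕜] {E : Type*} [NormedAddCommGroup E] [NormedSpace 𝕜 E]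
  {b : ℕ → E} {bs : ℕ → StrongDual 𝕜 E}

lemma norm_sum_smul_eq (hE : IsNUBasis 𝕜 E b bs) (t : Finset ℕ) (g ω : ℕ → 𝕜)
    (hω : ∀ i, ‖ω i‖ = 1) : ‖∑ i ∈ t, ω i • g i • b i‖ = ‖∑ i ∈ t, g i • b i‖ := by
  have h := hE.unconditional (Finsupp.indicator t fun i _ => g i) ω hω
  simp only [smul_comm (ω _)] at h ⊢
  rwa [sum_support_indicator_smul, sum_support_indicator_smul] at h

lemma norm_sum_le_of_subset (hE : IsNUBasis 𝕜 E b bs) {F t : Finset ℕ} (hF : F ⊆ t)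
    (g : ℕ → 𝕜) : ‖∑ i ∈ F, g i • b i‖ ≤ ‖∑ i ∈ t, g i • b i‖ := by
  classical
  -- flipping the signs off `F` does not change the norm, and averaging the two sums gives `F`
  set ω : ℕ → 𝕜 := fun i => if i ∈ F then 1 else -1
  have hω : ∀ i, ‖ω i‖ = 1 := fun i => by by_cases h : i ∈ F <;> simp [ω, h]
  have hsum : (∑ i ∈ t, g i • b i) + ∑ i ∈ t, ω i • g i • b i =
      (2 : 𝕜) • ∑ i ∈ F, g i • b i := by
    rw [← Finset.sum_add_distrib, Finset.smul_sum, ← Finset.inter_eq_right.2 hF,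
      ← Finset.sum_ite_mem]
    refine Finset.sum_congr rfl fun i _ => ?_
    by_cases h : i ∈ F <;> simp [ω, h, two_smul]
  have := norm_add_le (∑ i ∈ t, g i • b i) (∑ i ∈ t, ω i • g i • b i)
  rw [hsum, norm_smul, RCLike.norm_ofNat, hE.norm_sum_smul_eq t g ω hω] at this
  linarith

lemma norm_sum_le_norm_sum_support (hE : IsNUBasis 𝕜 E b bs) (a : ℕ →₀ 𝕜)
    (F : Finset ℕ) : ‖∑ i ∈ F, a i • b i‖ ≤ ‖∑ i ∈ a.support, a i • b i‖ := by
  classical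
  have hsupp : ∑ i ∈ a.support, a i • b i = ∑ i ∈ F ∪ a.support, a i • b i :=
    Finset.sum_subset Finset.subset_union_right fun i _ hi => by
      rw [Finsupp.notMem_support_iff.1 hi, zero_smul]
  rw [hsupp]
  exact hE.norm_sum_le_of_subset Finset.subset_union_left _

lemma norm_partialSum_le (hE : IsNUBasis 𝕜 E b bs) (x : E) (N : ℕ) :
    ‖∑ i ∈ Finset.range N, bs i x • b i‖ ≤ ‖x‖ := by
  refine ge_of_tendsto (hE.expansion x).norm ?_
  filter_upwards [eventually_ge_atTop N] with M hM
  exact hE.norm_sum_le_of_subset (Finset.range_subset_range.2 hM) _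

lemma map_basis_eq_of_tendsto (hE : IsNUBasis 𝕜 E b bs) {X : Type*} [AddCommGroup X]
    [Module 𝕜 X] [TopologicalSpace X] [T2Space X] {e : ℕ → X} {Λ : E → X}
    (hΛ : ∀ x, Tendsto (fun N => ∑ i ∈ Finset.range N, bs i x • e i) atTop (𝓝 (Λ x)))
    (j : ℕ) : Λ (b j) = e j := by
  refine tendsto_nhds_unique (hΛ (b j)) (tendsto_const_nhds.congr' ?_)
  filter_upwards [eventually_gt_atTop j] with N hN
  simp [hE.biortho, hN]

end IsNUBasis

namespace IsXFE

variable {𝕜 : Type*} [RCLike 𝕜] {E : Type*} [NormedAddCommGroup E] [NormedSpace 𝕜 E]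
  {b : ℕ → E} {bs : ℕ → StrongDual 𝕜 E} {𝓕 : Set (Finset ℕ)}
  {X : Type*} [NormedAddCommGroup X] [NormedSpace 𝕜 X] {e : ℕ → X}

lemma norm_sum_basis_le_of_mem (hE : IsNUBasis 𝕜 E b bs) (hX : IsXFE 𝕜 𝓕 E b X e)
    (a : ℕ →₀ 𝕜) {F : Finset ℕ} (hF : F ∈ 𝓕) :
    ‖∑ i ∈ F, a i • b i‖ ≤ ‖∑ i ∈ a.support, a i • e i‖ := by
  rw [hX.norm_eq]
  refine le_csSup ⟨‖∑ i ∈ a.support, a i • b i‖, ?_⟩ ⟨F, hF, rfl⟩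
  rintro r ⟨G, -, rfl⟩
  exact hE.norm_sum_le_norm_sum_support a G

lemma norm_sum_le (hE : IsNUBasis 𝕜 E b bs) (hX : IsXFE 𝕜 𝓕 E b X e) (h𝓕 : 𝓕.Nonempty)
    (t : Finset ℕ) (g : ℕ → 𝕜) : ‖∑ i ∈ t, g i • e i‖ ≤ ‖∑ i ∈ t, g i • b i‖ := by
  rw [← sum_support_indicator_smul t g e, ← sum_support_indicator_smul t g b, hX.norm_eq]
  obtain ⟨F₀, hF₀⟩ := h𝓕
  refine csSup_le ⟨_, F₀, hF₀, rfl⟩ ?_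
  rintro r ⟨F, -, rfl⟩
  exact hE.norm_sum_le_norm_sum_support _ F

lemma norm_sum_eq_of_mem (hE : IsNUBasis 𝕜 E b bs) (hX : IsXFE 𝕜 𝓕 E b X e)
    {t : Finset ℕ} (ht : t ∈ 𝓕) (g : ℕ → 𝕜) :
    ‖∑ i ∈ t, g i • e i‖ = ‖∑ i ∈ t, g i • b i‖ := by
  refine le_antisymm (hX.norm_sum_le hE ⟨t, ht⟩ t g) ?_
  have h := hX.norm_sum_basis_le_of_mem hE (Finsupp.indicator t fun i _ => g i) ht
  rwa [sum_support_indicator_smul,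
    Finset.sum_congr rfl fun i hi => by rw [Finsupp.indicator_of_mem hi]] at h

variable [CompleteSpace X]

lemma exists_tendsto_partialSum (hE : IsNUBasis 𝕜 E b bs) (hX : IsXFE 𝕜 𝓕 E b X e)
    (h𝓕 : 𝓕.Nonempty) : ∃ Λ : E →L[𝕜] X, ‖Λ‖ ≤ 1 ∧
      ∀ x, Tendsto (fun N => ∑ i ∈ Finset.range N, bs i x • e i) atTop (𝓝 (Λ x)) := by
  let P : ℕ → E →ₗ[𝕜] X := fun N => ∑ i ∈ Finset.range N, (bs i).smulRight (e i)
  have hP : ∀ N x, P N x = ∑ i ∈ Finset.range N, bs i x • e i := fun N x => by simp [P]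
  have hcauchy : ∀ x, CauchySeq fun N => P N x := fun x => by
    refine Metric.cauchySeq_iff'.2 fun ε hε => ?_
    obtain ⟨N₀, hN₀⟩ := Metric.cauchySeq_iff'.1 (hE.expansion x).cauchySeq ε hε
    refine ⟨N₀, fun N hN => ?_⟩
    calc dist (P N x) (P N₀ x) = ‖∑ i ∈ Finset.Ico N₀ N, bs i x • e i‖ := by
          rw [dist_eq_norm, hP, hP, Finset.sum_Ico_eq_sub _ hN]
      _ ≤ ‖∑ i ∈ Finset.Ico N₀ N, bs i x • b i‖ := hX.norm_sum_le hE h𝓕 _ _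
      _ < ε := by simpa [dist_eq_norm, Finset.sum_Ico_eq_sub _ hN] using hN₀ N hN
  choose Λx hΛx using fun x => cauchySeq_tendsto_of_complete (hcauchy x)
  let Λ := linearMapOfTendsto Λx P (tendsto_pi_nhds.2 hΛx)
  have hbound : ∀ x, ‖Λ x‖ ≤ 1 * ‖x‖ := fun x => by
    refine le_of_tendsto (hΛx x).norm (Eventually.of_forall fun N => ?_)
    rw [one_mul, hP]
    exact (hX.norm_sum_le hE h𝓕 _ _).trans (hE.norm_partialSum_le x N)
  exact ⟨Λ.mkContinuous 1 hbound, LinearMap.mkContinuous_norm_le _ zero_le_one _,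
    fun x => (hΛx x).congr (hP · x)⟩

end IsXFE

section SupportedOnClosure

variable {𝕜 : Type*} [RCLike 𝕜] {E : Type*} [NormedAddCommGroup E] [NormedSpace 𝕜 E]
  {b : ℕ → E} {bs : ℕ → StrongDual 𝕜 E} {𝓕 : Set (Finset ℕ)}
  {X : Type*} [NormedAddCommGroup X] [NormedSpace 𝕜 X] {e : ℕ → X}
  {A : Set ℕ}

lemma norm_partialSum_eq_of_supported (hE : IsNUBasis 𝕜 E b bs) (hX : IsXFE 𝕜 𝓕 E b X e)
    (hA : A ∈ famClosure 𝓕) {x : E} (hx : ∀ i ∉ A, bs i x = 0) (N : ℕ) :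
    ‖∑ i ∈ Finset.range N, bs i x • e i‖ = ‖∑ i ∈ Finset.range N, bs i x • b i‖ := by
  classical
  have hxA : ∀ i, bs i x ≠ 0 → i ∈ A := fun i hi => by_contra fun hiA => hi (hx i hiA)
  rw [← Finset.sum_filter_of_ne (f := fun i => bs i x • e i) (p := (· ∈ A))
      fun i _ h => hxA i (left_ne_zero_of_smul h),
    ← Finset.sum_filter_of_ne (f := fun i => bs i x • b i) (p := (· ∈ A))
      fun i _ h => hxA i (left_ne_zero_of_smul h)]
  exact hX.norm_sum_eq_of_mem hE (hA _ fun i hi => (Finset.mem_filter.1 hi).2) _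

lemma exists_norm_le_of_mem_span (hE : IsNUBasis 𝕜 E b bs) (hX : IsXFE 𝕜 𝓕 E b X e)
    (hA : A ∈ famClosure 𝓕) {Λ : E →L[𝕜] X} (hΛb : ∀ j, Λ (b j) = e j)
    {xs : StrongDual 𝕜 X} (hxs : ∀ i ∉ A, xs (e i) = 0)
    {z : X} (hz : z ∈ Submodule.span 𝕜 (Set.range e)) :
    ∃ u : E, ‖u‖ ≤ ‖z‖ ∧ xs z = xs (Λ u) := by
  classical
  obtain ⟨c, rfl⟩ := Finsupp.mem_span_range_iff_exists_finsupp.1 hz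
  set t := c.support.filter (· ∈ A)
  refine ⟨∑ i ∈ t, c i • b i,
    hX.norm_sum_basis_le_of_mem hE c (hA t fun i hi => (Finset.mem_filter.1 hi).2), ?_⟩
  simp only [Finsupp.sum, map_sum, map_smul, hΛb, t]
  exact (Finset.sum_filter_of_ne fun i _ h =>
    by_contra fun hiA => h (by rw [hxs i hiA, smul_zero])).symm

end SupportedOnClosure

theorem norm_eq_of_supported_on_closure_general
    {𝕜 : Type*} [RCLike 𝕜]
    (E : Type*) [NormedAddCommGroup E] [NormedSpace 𝕜 E]
    (b : ℕ → E) (bs : ℕ → StrongDual 𝕜 E) (hE : IsNUBasis 𝕜 E b bs)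
    (𝓕 : Set (Finset ℕ))
    (X : Type*) [NormedAddCommGroup X] [NormedSpace 𝕜 X] [CompleteSpace X]
    (e : ℕ → X) (hX : IsXFE 𝕜 𝓕 E b X e)
    (A : Set ℕ) (hA : A ∈ famClosure 𝓕) :
    (∀ x : E, (∀ i ∉ A, bs i x = 0) →
      ∃ y : X,
        Filter.Tendsto (fun N => ∑ i ∈ Finset.range N, bs i x • e i)
          Filter.atTop (nhds y) ∧ ‖y‖ = ‖x‖) ∧
    (∀ xs : StrongDual 𝕜 X, (∀ i ∉ A, xs (e i) = 0) →
      ∃ Xs : StrongDual 𝕜 E, (∀ i, Xs (b i) = xs (e i)) ∧ ‖xs‖ = ‖Xs‖) := by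
  obtain ⟨Λ, hΛ1, hΛ⟩ := hX.exists_tendsto_partialSum hE ⟨∅, hA ∅ (by simp)⟩
  have hΛb := hE.map_basis_eq_of_tendsto hΛ
  refine ⟨fun x hx => ⟨Λ x, hΛ x, ?_⟩, fun xs hxs => ⟨xs.comp Λ, fun i => by simp [hΛb], ?_⟩⟩
  · exact tendsto_nhds_unique (hΛ x).norm <| (hE.expansion x).norm.congr fun N =>
      (norm_partialSum_eq_of_supported hE hX hA hx N).symm
  refine le_antisymm (xs.opNorm_le_bound_of_dense hX.dense_span (norm_nonneg _) ?_) ?_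
  · intro z hz
    obtain ⟨u, hu, hxz⟩ := exists_norm_le_of_mem_span hE hX hA hΛb hxs hz
    calc ‖xs z‖ = ‖xs.comp Λ u‖ := by rw [hxz, ContinuousLinearMap.comp_apply]
      _ ≤ ‖xs.comp Λ‖ * ‖u‖ := (xs.comp Λ).le_opNorm u
      _ ≤ ‖xs.comp Λ‖ * ‖z‖ := by gcongr
  · calc ‖xs.comp Λ‖ ≤ ‖xs‖ * ‖Λ‖ := xs.opNorm_comp_le Λ
      _ ≤ ‖xs‖ := mul_le_of_le_one_right (norm_nonneg _) hΛ1

/-- Corollary.  If `A ∈ 𝓕̄` then `‖Λ𝐱‖ = ‖𝐱‖_E` for every `𝐱 ∈ E`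
supported on `A` (where `Λ𝐱` is the sum in `X_{𝓕,E}` of the norm-convergent series
`∑ ⟨𝐞_i^*,𝐱⟩ e_i`), and `‖x*‖ = ‖𝐱*‖_{E*}` for every `x* ∈ X_{𝓕,E}^*` supported on
`A` (where `𝐱*` is the functional on `E` with `𝐱*(𝐞_i) = x*(e_i)` for all `i`). -/
theorem norm_eq_of_supported_on_closure
    {𝕜 : Type*} [RCLike 𝕜]
    (E : Type*) [NormedAddCommGroup E] [NormedSpace 𝕜 E] [CompleteSpace E]
    (b : ℕ → E) (bs : ℕ → StrongDual 𝕜 E) (hE : IsNUBasis 𝕜 E b bs)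
    (𝓕 : Set (Finset ℕ)) (h𝓕 : IsCombFamily 𝓕)
    (X : Type*) [NormedAddCommGroup X] [NormedSpace 𝕜 X] [CompleteSpace X]
    (e : ℕ → X) (hX : IsXFE 𝕜 𝓕 E b X e)
    (eStar : ℕ → StrongDual 𝕜 X)
    (heStar : ∀ i j, eStar i (e j) = if i = j then (1 : 𝕜) else 0)
    (A : Set ℕ) (hA : A ∈ famClosure 𝓕) :
    (∀ x : E, (∀ i ∉ A, bs i x = 0) →
      ∃ y : X,
        Filter.Tendsto (fun N => ∑ i ∈ Finset.range N, bs i x • e i)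
          Filter.atTop (nhds y) ∧ ‖y‖ = ‖x‖) ∧
    (∀ xs : StrongDual 𝕜 X, (∀ i ∉ A, xs (e i) = 0) →
      ∃ Xs : StrongDual 𝕜 E, (∀ i, Xs (b i) = xs (e i)) ∧ ‖xs‖ = ‖Xs‖) :=
  norm_eq_of_supported_on_closure_general E b bs hE 𝓕 X e hX A hA
end
end

section
/- Let E be a Banach space with a normalized 1-unconditional basis (𝐞_i) and let 𝓕 be a combinatorial family. If either (𝐞_i) is a shrinking basis of E or the family 𝓕 is compact, then the canonical basis (e_i) is a shrinking basis of X_{𝓕,E}. -/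
open Filter Topology NormedSpace

noncomputable section

noncomputable def WellFounded.rank {α : Type*} {r : α → α → Prop} (hwf : WellFounded r)
    (a : α) : Ordinal := (hwf.apply a).rank

theorem WellFounded.rank_eq {α : Type*} {r : α → α → Prop} (hwf : WellFounded r) (a : α) :
    hwf.rank a = ⨆ b : { b // r b a }, Order.succ (hwf.rank b) :=
  (hwf.apply a).rank_eq

theorem WellFounded.rank_lt_of_rel {α : Type*} {r : α → α → Prop} (hwf : WellFounded r)
    {a b : α} (h : r a b) : hwf.rank a < hwf.rank b :=
  Acc.rank_lt_of_rel _ h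

namespace XFEShrink

def Hered (𝓖 : Set (Finset ℕ)) : Prop := ∀ F ∈ 𝓖, ∀ G : Finset ℕ, G ⊆ F → G ∈ 𝓖

def NoBranch (𝓖 : Set (Finset ℕ)) : Prop :=
  ∀ A : Set ℕ, A.Infinite → ∃ G : Finset ℕ, ↑G ⊆ A ∧ G ∉ 𝓖

def Rel (𝓖 : Set (Finset ℕ)) (t s : Finset ℕ) : Prop :=
  t ∈ 𝓖 ∧ ∃ n, (∀ i ∈ s, i < n) ∧ t = insert n s

lemma Rel.sub {𝓖 : Set (Finset ℕ)} {t s : Finset ℕ} (h : Rel 𝓖 t s) : s ⊆ t := by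
  obtain ⟨-, n, -, rfl⟩ := h; exact Finset.subset_insert _ _

lemma Rel.card {𝓖 : Set (Finset ℕ)} {t s : Finset ℕ} (h : Rel 𝓖 t s) :
    s.card + 1 = t.card := by
  obtain ⟨-, n, hn, rfl⟩ := h
  rw [Finset.card_insert_of_notMem (fun hmem => lt_irrefl n (hn n hmem))]

lemma wf {𝓖 : Set (Finset ℕ)} (h1 : Hered 𝓖) (h2 : NoBranch 𝓖) :
    WellFounded (Rel 𝓖) := by
  by_contra hwf
  have hex : ∃ s, ¬ Acc (Rel 𝓖) s := by
    by_contra h; push_neg at h; exact hwf ⟨h⟩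
  obtain ⟨s0, hs0⟩ := hex
  have step : ∀ s, ¬ Acc (Rel 𝓖) s → ∃ t, Rel 𝓖 t s ∧ ¬ Acc (Rel 𝓖) t := by
    intro s hs
    by_contra h; push_neg at h
    exact hs (Acc.intro s fun t ht => h t ht)
  choose nxt hnxt1 hnxt2 using step
  let g : {s : Finset ℕ // ¬ Acc (Rel 𝓖) s} → {s : Finset ℕ // ¬ Acc (Rel 𝓖) s} :=
    fun p => ⟨nxt p.1 p.2, hnxt2 p.1 p.2⟩
  let f : ℕ → {s : Finset ℕ // ¬ Acc (Rel 𝓖) s} := fun n => g^[n] ⟨s0, hs0⟩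
  have hchain : ∀ n, Rel 𝓖 (f (n+1)).1 (f n).1 := by
    intro n
    have : f (n+1) = g (f n) := Function.iterate_succ_apply' g n _
    rw [this]
    exact hnxt1 (f n).1 (f n).2
  have hmono : ∀ n m, n ≤ m → (f n).1 ⊆ (f m).1 := by
    intro n m hnm
    induction m with
    | zero => simp_all
    | succ m ih =>
      rcases Nat.lt_or_ge n (m+1) with h | h
      · exact (ih (Nat.lt_succ_iff.mp h)).trans (hchain m).sub
      · have : n = m + 1 := le_antisymm hnm h
        subst this; exact subset_rfl
  have hcard : ∀ n, n ≤ (f n).1.card := by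
    intro n
    induction n with
    | zero => exact Nat.zero_le _
    | succ n ih => rw [← (hchain n).card]; omega
  have hAinf : (⋃ n, ((f n).1 : Set ℕ)).Infinite := by
    intro hfin
    have hsub : ∀ n, (f n).1 ⊆ hfin.toFinset := by
      intro n x hx
      simp only [Set.Finite.mem_toFinset]
      exact Set.mem_iUnion.mpr ⟨n, hx⟩
    have := (hcard (hfin.toFinset.card + 1)).trans
      (Finset.card_le_card (hsub (hfin.toFinset.card + 1)))
    omega
  obtain ⟨G, hGsub, hGnot⟩ := h2 _ hAinf
  apply hGnot
  have hidx : ∀ x ∈ G, ∃ n, x ∈ (f n).1 := by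
    intro x hx
    have := hGsub hx
    simpa using Set.mem_iUnion.mp this
  choose idx hidx using hidx
  set N : ℕ := G.sup (fun x => if hx : x ∈ G then idx x hx else 0) with hN
  have hGsub' : G ⊆ (f (N+1)).1 := by
    intro x hx
    apply hmono (idx x hx) (N+1) _ (hidx x hx)
    have : idx x hx ≤ N := by
      have := Finset.le_sup (f := fun x => if hx : x ∈ G then idx x hx else 0) hx
      simpa [hx] using this
    omega
  have hmem : (f (N+1)).1 ∈ 𝓖 := (hchain N).1
  exact h1 _ hmem G hGsub'

end XFEShrink

namespace XFEShrink

def Der (𝓖 : Set (Finset ℕ)) (M : ℕ) : Set (Finset ℕ) :=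
  {G | (∀ i ∈ G, M < i) ∧ ∃ n ≤ M, insert n G ∈ 𝓖}

lemma der_hered {𝓖 : Set (Finset ℕ)} (h1 : Hered 𝓖) (M : ℕ) : Hered (Der 𝓖 M) := by
  rintro F ⟨hgt, n, hnM, hmem⟩ G hGF
  exact ⟨fun i hi => hgt i (hGF hi), n, hnM,
    h1 _ hmem _ (Finset.insert_subset_insert _ hGF)⟩

lemma der_nobranch {𝓖 : Set (Finset ℕ)} (h1 : Hered 𝓖) (h2 : NoBranch 𝓖) (M : ℕ) :
    NoBranch (Der 𝓖 M) := by
  intro A hA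
  have hA' : (A \ Set.Iic M).Infinite := hA.diff (Set.finite_Iic M)
  obtain ⟨G, hGsub, hGnot⟩ := h2 _ hA'
  refine ⟨G, fun x hx => ((hGsub hx).1), fun hGder => ?_⟩
  obtain ⟨-, n, -, hmem⟩ := hGder
  exact hGnot (h1 _ hmem _ (Finset.subset_insert _ _))

lemma rank_le_of_forall {α : Type*} {r : α → α → Prop} (hwf : WellFounded r) (s : α)
    (o : Ordinal) (h : ∀ t, r t s → hwf.rank t < o) : hwf.rank s ≤ o := by
  rw [hwf.rank_eq]
  exact Ordinal.iSup_le fun b => Order.succ_le_of_lt (h b.1 b.2)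

open Classical in
lemma rank_der_le {𝓖 : Set (Finset ℕ)} (h1 : Hered 𝓖) (h2 : NoBranch 𝓖) (M : ℕ)
    (s : Finset ℕ) :
    (wf (der_hered h1 M) (der_nobranch h1 h2 M)).rank s ≤
      ((Finset.range (M+1)).filter (fun n => insert n s ∈ 𝓖)).sup
        (fun n => (wf h1 h2).rank (insert n s)) := by
  induction s using (wf (der_hered h1 M) (der_nobranch h1 h2 M)).induction with
  | _ s IH =>
  apply rank_le_of_forall
  intro t ht
  obtain ⟨htD, m, hm, rfl⟩ := ht
  obtain ⟨hgt, n0, hn0M, hn0mem⟩ := htD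
  have hmt : M < m := hgt m (Finset.mem_insert_self _ _)
  have key : ∀ n, n ≤ M → insert n (insert m s) ∈ 𝓖 →
      (wf h1 h2).rank (insert n (insert m s)) < (wf h1 h2).rank (insert n s) := by
    intro n hnM hmem
    apply (wf h1 h2).rank_lt_of_rel
    refine ⟨hmem, m, ?_, Finset.insert_comm n m s⟩
    intro i hi
    rcases Finset.mem_insert.mp hi with rfl | hi
    · omega
    · exact hm i hi
  have hsub : ∀ n, n ≤ M → insert n (insert m s) ∈ 𝓖 → insert n s ∈ 𝓖 := by
    intro n hnM hmem
    exact h1 _ hmem _ (Finset.insert_subset_insert _ (Finset.subset_insert _ _))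
  have hn0' : n0 ∈ (Finset.range (M+1)).filter (fun n => insert n s ∈ 𝓖) := by
    simp only [Finset.mem_filter, Finset.mem_range]
    exact ⟨by omega, hsub n0 hn0M hn0mem⟩
  have hpos : (0 : Ordinal) <
      ((Finset.range (M+1)).filter (fun n => insert n s ∈ 𝓖)).sup
        (fun n => (wf h1 h2).rank (insert n s)) := by
    calc (0:Ordinal) ≤ (wf h1 h2).rank (insert n0 (insert m s)) := zero_le
    _ < (wf h1 h2).rank (insert n0 s) := key n0 hn0M hn0mem
    _ ≤ _ := Finset.le_sup (f := fun n => (wf h1 h2).rank (insert n s)) hn0'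
  calc (wf (der_hered h1 M) (der_nobranch h1 h2 M)).rank (insert m s)
      ≤ ((Finset.range (M+1)).filter (fun n => insert n (insert m s) ∈ 𝓖)).sup
        (fun n => (wf h1 h2).rank (insert n (insert m s))) :=
        IH _ ⟨⟨hgt, n0, hn0M, hn0mem⟩, m, hm, rfl⟩
    _ < _ := by
        rw [Finset.sup_lt_iff hpos]
        intro n hn
        simp only [Finset.mem_filter, Finset.mem_range] at hn
        obtain ⟨hnr, hnmem⟩ := hn
        exact lt_of_lt_of_le (key n (by omega) hnmem)
          (Finset.le_sup (f := fun n => (wf h1 h2).rank (insert n s)) (by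
            simp only [Finset.mem_filter, Finset.mem_range]
            exact ⟨hnr, hsub n (by omega) hnmem⟩))

open Classical in
lemma rank_der_lt {𝓖 : Set (Finset ℕ)} (h1 : Hered 𝓖) (h2 : NoBranch 𝓖) (M : ℕ)
    (hex : ∃ n, n ≤ M ∧ {n} ∈ 𝓖) :
    (wf (der_hered h1 M) (der_nobranch h1 h2 M)).rank ∅ < (wf h1 h2).rank ∅ := by
  obtain ⟨n0, hn0M, hn0⟩ := hex
  have key : ∀ n, {n} ∈ 𝓖 → (wf h1 h2).rank {n} < (wf h1 h2).rank ∅ := by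
    intro n hn
    apply (wf h1 h2).rank_lt_of_rel
    exact ⟨by simpa using hn, n, by simp, by simp⟩
  have hpos : (0 : Ordinal) < (wf h1 h2).rank ∅ :=
    lt_of_le_of_lt zero_le (key n0 hn0)
  calc (wf (der_hered h1 M) (der_nobranch h1 h2 M)).rank ∅
      ≤ ((Finset.range (M+1)).filter (fun n => insert n (∅:Finset ℕ) ∈ 𝓖)).sup
        (fun n => (wf h1 h2).rank (insert n ∅)) := rank_der_le h1 h2 M ∅
    _ < _ := by
        rw [Finset.sup_lt_iff hpos]
        intro n hn
        simp only [Finset.mem_filter, Finset.mem_range, Finset.insert_empty] at hn ⊢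
        exact key n (of_decide_eq_true (List.mem_filter.mp hn).2)

end XFEShrink

namespace XFEShrink

theorem ptak_aux : ∀ (o : Ordinal) (𝓖 : Set (Finset ℕ)) (h1 : Hered 𝓖) (h2 : NoBranch 𝓖),
    (wf h1 h2).rank ∅ = o → ∀ δ : ℝ, 0 < δ → ∀ N : ℕ,
    ∃ (s : Finset ℕ) (μ : ℕ → ℝ), (∀ k, 0 ≤ μ k) ∧ (∀ k, k ∉ s → μ k = 0) ∧
      (∑ k ∈ s, μ k) = 1 ∧ (∀ k ∈ s, N < k) ∧ ∀ G ∈ 𝓖, (∑ k ∈ G, μ k) ≤ δ := by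
  intro o
  induction o using Ordinal.induction with
  | _ o IH =>
  intro 𝓖 h1 h2 hrank δ hδ N
  have good : ∀ M : ℕ, ∃ (s : Finset ℕ) (μ : ℕ → ℝ), (∀ k, 0 ≤ μ k) ∧
      (∀ k, k ∉ s → μ k = 0) ∧ (∑ k ∈ s, μ k) = 1 ∧ (∀ k ∈ s, M < k) ∧
      ∀ G ∈ Der 𝓖 M, (∑ k ∈ G, μ k) ≤ δ/2 := by
    intro M
    by_cases hex : ∃ n, n ≤ M ∧ {n} ∈ 𝓖
    · exact IH _ (hrank ▸ rank_der_lt h1 h2 M hex) (Der 𝓖 M)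
        (der_hered h1 M) (der_nobranch h1 h2 M) rfl (δ/2) (by positivity) M
    · refine ⟨{M+1}, fun k => if k = M+1 then 1 else 0, ?_, ?_, ?_, ?_, ?_⟩
      · intro k; by_cases h : k = M+1 <;> simp [h]
      · intro k hk; simp only [Finset.mem_singleton] at hk; simp [hk]
      · simp
      · intro k hk; simp only [Finset.mem_singleton] at hk; omega
      · rintro G ⟨-, n, hnM, hmem⟩
        exact absurd ⟨n, hnM, h1 _ hmem _ (by simp)⟩ hex
  choose S W hW1 hW2 hW3 hW4 hW5 using good
  set Mse : ℕ → ℕ := fun j => Nat.rec N (fun _ Mj => max ((S Mj).sup id) Mj) j with hMse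
  have hMse0 : Mse 0 = N := rfl
  have hMseS : ∀ j, Mse (j+1) = max ((S (Mse j)).sup id) (Mse j) := fun j => rfl
  have hMono : Monotone Mse := monotone_nat_of_le_succ (fun j => by
    rw [hMseS]; exact le_max_right _ _)
  have hsupb : ∀ j k, k ∈ S (Mse j) → k ≤ Mse (j+1) := by
    intro j k hk
    rw [hMseS]
    exact le_max_of_le_left (Finset.le_sup (f := id) hk)
  set r : ℕ := ⌈2/δ⌉₊ with hr
  have hrpos : 0 < r := Nat.ceil_pos.mpr (by positivity)
  have hrδ : 1/(r:ℝ) ≤ δ/2 := by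
    rw [div_le_div_iff₀ (by exact_mod_cast hrpos) (by norm_num)]
    have h2δ : 2/δ ≤ (r:ℝ) := Nat.le_ceil _
    rw [div_le_iff₀ hδ] at h2δ
    linarith
  refine ⟨(Finset.range r).biUnion (fun j => S (Mse j)),
    fun k => (1/r) * ∑ j ∈ Finset.range r, W (Mse j) k, ?_, ?_, ?_, ?_, ?_⟩
  · intro k
    apply mul_nonneg (by positivity)
    exact Finset.sum_nonneg fun j _ => hW1 _ k
  · intro k hk
    dsimp only
    have : ∀ j ∈ Finset.range r, W (Mse j) k = 0 := by
      intro j hj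
      exact hW2 _ k (fun hmem => hk (Finset.mem_biUnion.mpr ⟨j, hj, hmem⟩))
    rw [Finset.sum_eq_zero this, mul_zero]
  · rw [← Finset.mul_sum, Finset.sum_comm]
    have : ∀ j ∈ Finset.range r,
        (∑ k ∈ (Finset.range r).biUnion (fun j => S (Mse j)), W (Mse j) k) = 1 := by
      intro j hj
      rw [← hW3 (Mse j)]
      apply (Finset.sum_subset _ _).symm
      · intro x hx; exact Finset.mem_biUnion.mpr ⟨j, hj, hx⟩
      · intro x _ hx; exact hW2 _ x hx
    rw [Finset.sum_congr rfl this, Finset.sum_const, Finset.card_range, nsmul_eq_mul,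
      mul_one, one_div, inv_mul_cancel₀ (by exact_mod_cast hrpos.ne')]
  · intro k hk
    obtain ⟨j, hj, hkj⟩ := Finset.mem_biUnion.mp hk
    have h1k := hW4 _ _ hkj
    have : N ≤ Mse j := hMse0 ▸ hMono (Nat.zero_le j)
    omega
  · intro G hG
    rw [← Finset.mul_sum, Finset.sum_comm]
    set T : ℕ → ℝ := fun j => ∑ k ∈ G, W (Mse j) k with hT
    have hT0 : ∀ j, 0 ≤ T j := fun j => Finset.sum_nonneg fun k _ => hW1 _ k
    have hT1 : ∀ j, T j ≤ 1 := by
      intro j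
      have he : T j = ∑ k ∈ G ∩ S (Mse j), W (Mse j) k := by
        apply (Finset.sum_subset Finset.inter_subset_left _).symm
        intro x hx hx2
        exact hW2 _ x (fun hmem => hx2 (Finset.mem_inter.mpr ⟨hx, hmem⟩))
      rw [he, ← hW3 (Mse j)]
      exact Finset.sum_le_sum_of_subset_of_nonneg Finset.inter_subset_right
        (fun k _ _ => hW1 _ k)
    by_cases hall : ∀ j ∈ Finset.range r, T j ≤ δ/2
    · calc (1/(r:ℝ)) * ∑ j ∈ Finset.range r, T j
          ≤ (1/(r:ℝ)) * (r * (δ/2)) := by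
            apply mul_le_mul_of_nonneg_left _ (by positivity)
            calc ∑ j ∈ Finset.range r, T j ≤ ∑ _j ∈ Finset.range r, (δ/2) :=
              Finset.sum_le_sum hall
            _ = r * (δ/2) := by rw [Finset.sum_const, Finset.card_range, nsmul_eq_mul]
      _ = δ/2 := by field_simp
      _ ≤ δ := by linarith
    · push_neg at hall
      obtain ⟨jb, hjbr, hjbT⟩ := hall
      set bad := (Finset.range r).filter (fun j => δ/2 < T j) with hbad
      have hbadne : bad.Nonempty := ⟨jb, Finset.mem_filter.mpr ⟨hjbr, hjbT⟩⟩
      set j₀ := bad.min' hbadne with hj₀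
      have hj₀mem := bad.min'_mem hbadne
      have hj₀r : j₀ ∈ Finset.range r := (Finset.mem_filter.mp hj₀mem).1
      have hj₀T : δ/2 < T j₀ := (Finset.mem_filter.mp hj₀mem).2
      have hk0 : ∃ k0 ∈ G, k0 ∈ S (Mse j₀) := by
        by_contra h
        push_neg at h
        have : T j₀ = 0 := Finset.sum_eq_zero fun k hk => hW2 _ k (h k hk)
        rw [this] at hj₀T; linarith
      obtain ⟨k0, hk0G, hk0S⟩ := hk0
      have hsmall : ∀ j ∈ Finset.range r, j ≠ j₀ → T j ≤ δ/2 := by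
        intro j hjr hjne
        rcases Nat.lt_or_ge j j₀ with h | h
        · by_contra hT'
          push_neg at hT'
          have hmem : j ∈ bad := Finset.mem_filter.mpr ⟨hjr, hT'⟩
          have := bad.min'_le j hmem
          omega
        · have hj : j₀ + 1 ≤ j := by omega
          have hk0le : k0 ≤ Mse j := le_trans (hsupb j₀ k0 hk0S) (hMono hj)
          have hder : G.filter (fun i => Mse j < i) ∈ Der 𝓖 (Mse j) := by
            refine ⟨fun i hi => (Finset.mem_filter.mp hi).2, k0, hk0le, ?_⟩
            exact h1 _ hG _ (Finset.insert_subset hk0G (Finset.filter_subset _ _))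
          have hb := hW5 (Mse j) _ hder
          have he : T j = ∑ k ∈ G.filter (fun i => Mse j < i), W (Mse j) k := by
            apply (Finset.sum_subset (Finset.filter_subset _ _) _).symm
            intro x hxG hx
            simp only [Finset.mem_filter, not_and, not_lt] at hx
            exact hW2 _ x (fun hmem => absurd (hW4 _ _ hmem) (by
              have := hx hxG; omega))
          rw [he]; exact hb
      calc (1/(r:ℝ)) * ∑ j ∈ Finset.range r, T j
          = (1/(r:ℝ)) * (T j₀ + ∑ j ∈ (Finset.range r).erase j₀, T j) := by
            rw [Finset.add_sum_erase _ _ hj₀r]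
        _ ≤ (1/(r:ℝ)) * (1 + r * (δ/2)) := by
            apply mul_le_mul_of_nonneg_left _ (by positivity)
            apply add_le_add (hT1 j₀)
            calc ∑ j ∈ (Finset.range r).erase j₀, T j
                ≤ ∑ _j ∈ (Finset.range r).erase j₀, (δ/2) := by
                  apply Finset.sum_le_sum
                  intro j hj
                  exact hsmall j (Finset.mem_of_mem_erase hj) (Finset.ne_of_mem_erase hj)
              _ = ((Finset.range r).erase j₀).card * (δ/2) := by
                  rw [Finset.sum_const, nsmul_eq_mul]
              _ ≤ r * (δ/2) := by
                  apply mul_le_mul_of_nonneg_right _ (by positivity)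
                  have := Finset.card_erase_le (a := j₀) (s := Finset.range r)
                  rw [Finset.card_range] at this
                  exact_mod_cast this
        _ = 1/(r:ℝ) + δ/2 := by field_simp
        _ ≤ δ := by linarith

theorem ptak {𝓖 : Set (Finset ℕ)} (h1 : Hered 𝓖) (h2 : NoBranch 𝓖)
    {δ : ℝ} (hδ : 0 < δ) :
    ∃ (s : Finset ℕ) (μ : ℕ → ℝ), (∀ k, 0 ≤ μ k) ∧ (∀ k, k ∉ s → μ k = 0) ∧
      (∑ k ∈ s, μ k) = 1 ∧ ∀ G ∈ 𝓖, (∑ k ∈ G, μ k) ≤ δ := by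
  obtain ⟨s, μ, a, b, c, -, e⟩ := ptak_aux _ 𝓖 h1 h2 rfl δ hδ 0
  exact ⟨s, μ, a, b, c, e⟩

end XFEShrink

section Plumbing
namespace XFEShrink

variable {𝕜 : Type*} [RCLike 𝕜]
  {E : Type*} [NormedAddCommGroup E] [NormedSpace 𝕜 E]
  {X : Type*} [NormedAddCommGroup X] [NormedSpace 𝕜 X]
  {𝓕 : Set (Finset ℕ)} {b : ℕ → E} {e : ℕ → X}

lemma lin_eq (a : ℕ →₀ 𝕜) :
    Finsupp.linearCombination 𝕜 e a = ∑ i ∈ a.support, a i • e i :=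
  Finsupp.linearCombination_apply 𝕜 a

lemma sum_restrict (a : ℕ →₀ 𝕜) (F : Finset ℕ) :
    ∑ i ∈ F, a i • b i = ∑ i ∈ F ∩ a.support, a i • b i := by
  apply (Finset.sum_subset Finset.inter_subset_left ?_).symm
  intro i hiF hi
  have ha : a i = 0 := by
    by_contra h
    exact hi (Finset.mem_inter.mpr ⟨hiF, Finsupp.mem_support_iff.mpr h⟩)
  simp [ha]

lemma bdd (a : ℕ →₀ 𝕜) :
    BddAbove {r : ℝ | ∃ F ∈ 𝓕, r = ‖∑ i ∈ F, a i • b i‖} := by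
  have hfin : ((fun G : Finset ℕ => ‖∑ i ∈ G, a i • b i‖) '' ↑a.support.powerset).Finite :=
    (a.support.powerset.finite_toSet.image _)
  apply BddAbove.mono _ hfin.bddAbove
  rintro r ⟨F, hF, rfl⟩
  refine ⟨F ∩ a.support, by simp [Finset.mem_powerset], ?_⟩
  show ‖∑ i ∈ F ∩ a.support, a i • b i‖ = ‖∑ i ∈ F, a i • b i‖
  rw [← sum_restrict]

lemma norm_eqL (hX : IsXFE 𝕜 𝓕 E b X e) (a : ℕ →₀ 𝕜) :
    ‖Finsupp.linearCombination 𝕜 e a‖ =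
      sSup {r : ℝ | ∃ F ∈ 𝓕, r = ‖∑ i ∈ F, a i • b i‖} := by
  rw [lin_eq]; exact hX.norm_eq a

lemma normF (hX : IsXFE 𝕜 𝓕 E b X e) (a : ℕ →₀ 𝕜) {F : Finset ℕ} (hF : F ∈ 𝓕) :
    ‖∑ i ∈ F, a i • b i‖ ≤ ‖Finsupp.linearCombination 𝕜 e a‖ := by
  rw [norm_eqL hX]; exact le_csSup (bdd a) ⟨F, hF, rfl⟩

lemma empty_mem (h𝓕 : IsCombFamily 𝓕) : ∅ ∈ 𝓕 :=
  h𝓕.2 _ (h𝓕.1 0) ∅ (Finset.empty_subset _)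

lemma norm_leL (hX : IsXFE 𝕜 𝓕 E b X e) (h𝓕 : IsCombFamily 𝓕) (a : ℕ →₀ 𝕜) {C : ℝ}
    (hC : ∀ F ∈ 𝓕, ‖∑ i ∈ F, a i • b i‖ ≤ C) :
    ‖Finsupp.linearCombination 𝕜 e a‖ ≤ C := by
  rw [norm_eqL hX]
  exact csSup_le ⟨_, ⟨∅, empty_mem h𝓕, rfl⟩⟩ (by rintro r ⟨F, hF, rfl⟩; exact hC F hF)

lemma norm_filter_le (hX : IsXFE 𝕜 𝓕 E b X e) (h𝓕 : IsCombFamily 𝓕) (a : ℕ →₀ 𝕜)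
    (p : ℕ → Prop) [DecidablePred p] :
    ‖Finsupp.linearCombination 𝕜 e (a.filter p)‖ ≤ ‖Finsupp.linearCombination 𝕜 e a‖ := by
  apply norm_leL hX h𝓕
  intro F hF
  have hs : ∑ i ∈ F, (a.filter p) i • b i = ∑ i ∈ F.filter p, a i • b i := by
    rw [Finset.sum_filter]
    apply Finset.sum_congr rfl
    intro i _
    rw [Finsupp.filter_apply]
    split <;> simp
  rw [hs]
  exact normF hX a (h𝓕.2 F hF _ (Finset.filter_subset _ _))

lemma dual_eval_ite {Y : Type*} [NormedAddCommGroup Y] [NormedSpace 𝕜 Y]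
    {w : ℕ → Y} {φ : ℕ → StrongDual 𝕜 Y} (hbi : ∀ i j, φ i (w j) = if i = j then 1 else 0)
    (G : Finset ℕ) (t : ℕ → 𝕜) (l : ℕ) :
    φ l (∑ i ∈ G, t i • w i) = if l ∈ G then t l else 0 := by
  rw [map_sum]
  have hterm : ∀ i ∈ G, φ l (t i • w i) = if l = i then t i else 0 := by
    intro i _
    rw [map_smul, hbi, smul_eq_mul]
    split <;> simp
  rw [Finset.sum_congr rfl hterm, Finset.sum_ite_eq]

lemma estar_eval {eStar : ℕ → StrongDual 𝕜 X}
    (heStar : ∀ i j, eStar i (e j) = if i = j then (1:𝕜) else 0) (a : ℕ →₀ 𝕜) (j : ℕ) :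
    eStar j (Finsupp.linearCombination 𝕜 e a) = a j := by
  rw [lin_eq, dual_eval_ite (w := e) (φ := eStar) heStar a.support (fun i => a i) j]
  split
  · rfl
  · exact (Finsupp.notMem_support_iff.mp ‹_›).symm

end XFEShrink
end Plumbing

set_option maxHeartbeats 2000000 in
/-- If `(𝐞_i)` is a shrinking basis of `E` or `𝓕` is compact, then the
canonical basis `(e_i)` of `X_{𝓕,E}` is shrinking, i.e. the coordinate functionals
span a dense subspace of `X_{𝓕,E}^*`. -/
theorem canonical_basis_of_XFE_shrinking
    {𝕜 : Type*} [RCLike 𝕜]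
    (E : Type*) [NormedAddCommGroup E] [NormedSpace 𝕜 E] [CompleteSpace E]
    (b : ℕ → E) (bs : ℕ → StrongDual 𝕜 E) (hE : IsNUBasis 𝕜 E b bs)
    (𝓕 : Set (Finset ℕ)) (h𝓕 : IsCombFamily 𝓕)
    (X : Type*) [NormedAddCommGroup X] [NormedSpace 𝕜 X] [CompleteSpace X]
    (e : ℕ → X) (hX : IsXFE 𝕜 𝓕 E b X e)
    (eStar : ℕ → StrongDual 𝕜 X)
    (heStar : ∀ i j, eStar i (e j) = if i = j then (1 : 𝕜) else 0)
    (hyp : Dense (↑(Submodule.span 𝕜 (Set.range bs)) : Set (StrongDual 𝕜 E)) ∨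
      IsCompactFamily 𝓕) :
    Dense (↑(Submodule.span 𝕜 (Set.range eStar)) : Set (StrongDual 𝕜 X)) := by
  classical
  set L := Finsupp.linearCombination 𝕜 e with hLdef
  rw [Metric.dense_iff]
  intro f ε hε
  by_contra hcon
  rw [Set.not_nonempty_iff_eq_empty] at hcon
  have hfar : ∀ h ∈ Submodule.span 𝕜 (Set.range eStar), ε ≤ ‖f - h‖ := by
    intro h hmem
    by_contra hlt
    push_neg at hlt
    have : h ∈ Metric.ball f ε ∩ ↑(Submodule.span 𝕜 (Set.range eStar)) :=
      ⟨by rwa [Metric.mem_ball, dist_comm, dist_eq_norm], hmem⟩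
    rw [hcon] at this
    exact this
  -- tail functionals
  have hgmem : ∀ n : ℕ, (∑ i ∈ Finset.range n, f (e i) • eStar i) ∈
      Submodule.span 𝕜 (Set.range eStar) := by
    intro n
    exact Submodule.sum_mem _ fun i _ =>
      Submodule.smul_mem _ _ (Submodule.subset_span ⟨i, rfl⟩)
  have hgnorm : ∀ n : ℕ, ε ≤ ‖f - ∑ i ∈ Finset.range n, f (e i) • eStar i‖ :=
    fun n => hfar _ (hgmem n)
  -- Step: blocks far out with large f-value
  have step : ∀ n : ℕ, ∃ a : ℕ →₀ 𝕜, (∀ i ∈ a.support, n ≤ i) ∧ ‖L a‖ ≤ 1 ∧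
      ε/2 ≤ RCLike.re (f (L a)) := by
    intro n
    set g : StrongDual 𝕜 X := f - ∑ i ∈ Finset.range n, f (e i) • eStar i with hgdef
    have hgn : ε ≤ ‖g‖ := hgnorm n
    have hKpos : (0:ℝ) < ‖g‖ := lt_of_lt_of_le hε hgn
    have hge : ∀ i, i < n → g (e i) = 0 := by
      intro i hi
      have : g (e i) = f (e i) - ∑ j ∈ Finset.range n, f (e j) • eStar j (e i) := by
        simp [hgdef, ContinuousLinearMap.sub_apply, ContinuousLinearMap.sum_apply]
      rw [this]
      have : ∑ j ∈ Finset.range n, f (e j) • eStar j (e i)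
          = ∑ j ∈ Finset.range n, if i = j then f (e j) else 0 := by
        apply Finset.sum_congr rfl
        intro j _
        rw [heStar j i, smul_eq_mul]
        rcases eq_or_ne j i with rfl | hne
        · simp
        · simp [hne, Ne.symm hne]
      rw [this, Finset.sum_ite_eq, if_pos (Finset.mem_range.mpr hi), sub_self]
    -- a vector with large g-value
    have hx : ∃ x : X, ‖x‖ ≤ 1 ∧ (3/4)*ε < ‖g x‖ := by
      by_contra h
      push_neg at h
      have hb : ‖g‖ ≤ (3/4)*ε := by
        apply g.opNorm_le_bound (by positivity)
        intro x
        rcases eq_or_ne x 0 with rfl | hx0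
        · simp
        · have hnx : ‖((↑‖x‖ : 𝕜)⁻¹ • x : X)‖ = 1 := by
            rw [norm_smul, norm_inv, RCLike.norm_ofReal, abs_of_nonneg (norm_nonneg x),
              inv_mul_cancel₀ (norm_ne_zero_iff.mpr hx0)]
          have h2 := h _ hnx.le
          rw [map_smul, norm_smul, norm_inv, RCLike.norm_ofReal,
            abs_of_nonneg (norm_nonneg x)] at h2
          rw [inv_mul_le_iff₀ (norm_pos_iff.mpr hx0)] at h2
          calc ‖g x‖ ≤ ‖x‖ * (3/4*ε) := h2
          _ = 3/4*ε * ‖x‖ := mul_comm _ _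
      linarith
    obtain ⟨x, hx1, hx2⟩ := hx
    set K := ‖g‖ with hK
    set η : ℝ := min (1/4) (ε/(8*(K+1))) with hη
    have hη0 : 0 < η := by
      apply lt_min (by norm_num)
      have : (0:ℝ) < K + 1 := by positivity
      positivity
    have hη4 : η ≤ 1/4 := min_le_left _ _
    have hηK : K * η ≤ ε/8 := by
      have h1 : η ≤ ε/(8*(K+1)) := min_le_right _ _
      have h2 : K * η ≤ K * (ε/(8*(K+1))) :=
        mul_le_mul_of_nonneg_left h1 (norm_nonneg g)
      have h3 : K * (ε/(8*(K+1))) ≤ ε/8 := by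
        rw [mul_div_assoc', div_le_div_iff₀ (by positivity) (by norm_num : (0:ℝ) < 8)]
        nlinarith [hε.le, hKpos.le]
      linarith
    -- approximate x by finitely supported vector
    have hclose : ∃ y ∈ (Submodule.span 𝕜 (Set.range e) : Set X), dist x y < η := by
      have hd := hX.dense_span x
      exact Metric.mem_closure_iff.mp hd η hη0
    obtain ⟨y, hy, hxy⟩ := hclose
    obtain ⟨c, hc⟩ := Finsupp.mem_span_range_iff_exists_finsupp.mp hy
    have hyL : L c = y := by rw [hLdef, Finsupp.linearCombination_apply]; exact hc
    have hgy : (5/8)*ε < ‖g (L c)‖ := by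
      have h1 : ‖g x - g (L c)‖ ≤ K * η := by
        rw [← map_sub]
        calc ‖g (x - L c)‖ ≤ K * ‖x - L c‖ := g.le_opNorm _
        _ ≤ K * η := by
            apply mul_le_mul_of_nonneg_left _ (norm_nonneg g)
            rw [hyL, ← dist_eq_norm]
            exact hxy.le
      have h2 : ‖g x‖ - ‖g (L c)‖ ≤ K * η := le_trans (norm_sub_norm_le _ _) h1
      have : K * η ≤ ε/8 := hηK
      linarith
    set c' : ℕ →₀ 𝕜 := c.filter (fun i => n ≤ i) with hc'
    have hsupp' : ∀ i ∈ c'.support, n ≤ i := by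
      intro i hi
      rw [hc', Finsupp.support_filter, Finset.mem_filter] at hi
      exact hi.2
    have hgc' : g (L c') = g (L c) := by
      have hsplit : c.filter (fun i => n ≤ i) + c.filter (fun i => ¬ n ≤ i) = c :=
        Finsupp.filter_pos_add_filter_neg c _
      have hzero : g (L (c.filter (fun i => ¬ n ≤ i))) = 0 := by
        rw [hLdef, XFEShrink.lin_eq, map_sum]
        apply Finset.sum_eq_zero
        intro i hi
        rw [Finsupp.support_filter, Finset.mem_filter] at hi
        rw [map_smul, hge i (by omega), smul_zero]
      calc g (L c') = g (L c') + g (L (c.filter (fun i => ¬ n ≤ i))) := by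
            rw [hzero, add_zero]
      _ = g (L (c.filter (fun i => n ≤ i) + c.filter (fun i => ¬ n ≤ i))) := by
            rw [map_add, map_add]
      _ = g (L c) := by rw [hsplit]
    have hnc' : ‖L c'‖ ≤ 1 + η := by
      calc ‖L c'‖ ≤ ‖L c‖ := XFEShrink.norm_filter_le hX h𝓕 c _
      _ = ‖y‖ := by rw [hyL]
      _ ≤ ‖x‖ + ‖y - x‖ := by
          have := norm_add_le x (y - x); simpa using this
      _ ≤ 1 + η := by
          rw [norm_sub_rev, ← dist_eq_norm]
          exact add_le_add hx1 hxy.le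
    have hfc' : (5/8)*ε < ‖f (L c')‖ := by
      have hfg : f (L c') = g (L c') := by
        rw [hgdef]
        have : (∑ i ∈ Finset.range n, f (e i) • eStar i) (L c') = 0 := by
          rw [ContinuousLinearMap.sum_apply]
          apply Finset.sum_eq_zero
          intro j hj
          rw [ContinuousLinearMap.smul_apply, XFEShrink.estar_eval heStar]
          have : c' j = 0 := by
            rw [hc', Finsupp.filter_apply]
            rw [Finset.mem_range] at hj
            simp [hj, Nat.not_le.mpr hj]
          rw [this, smul_zero]
        simp [ContinuousLinearMap.sub_apply, this]
      rw [hfg, hgc']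
      exact hgy
    have htnorm : 0 < ‖f (L c')‖ := lt_of_le_of_lt (by positivity) hfc'
    have ht0 : f (L c') ≠ 0 := norm_ne_zero_iff.mp htnorm.ne'
    set σ : 𝕜 := ((↑‖f (L c')‖ : 𝕜) / f (L c')) * (↑(1+η : ℝ) : 𝕜)⁻¹ with hσ
    have hσnorm : ‖σ‖ = (1+η)⁻¹ := by
      rw [hσ, norm_mul, norm_div, RCLike.norm_ofReal,
        abs_of_nonneg (norm_nonneg (f (L c'))),
        div_self (norm_ne_zero_iff.mpr ht0), one_mul, norm_inv, RCLike.norm_ofReal,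
        abs_of_pos (by linarith : (0:ℝ) < 1 + η)]
    refine ⟨σ • c', ?_, ?_, ?_⟩
    · intro i hi
      exact hsupp' i (Finsupp.support_smul hi)
    · simp only [map_smul, norm_smul, hσnorm]
      rw [inv_mul_le_iff₀ (by linarith : (0:ℝ) < 1 + η), mul_one]
      exact hnc'
    · simp only [map_smul, smul_eq_mul]
      have hval : σ * f (L c') = ↑(‖f (L c')‖ * (1+η)⁻¹) := by
        rw [hσ, RCLike.ofReal_mul]
        rw [mul_comm ((↑‖f (L c')‖ : 𝕜) / f (L c')) _, mul_assoc,
          div_mul_cancel₀ _ ht0]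
        push_cast
        ring
      rw [hval, RCLike.ofReal_re]
      have h54 : 1 + η ≤ 5/4 := by linarith
      have hpos : (0:ℝ) < 1 + η := by linarith
      rw [le_mul_inv_iff₀ hpos]
      nlinarith [hfc'.le]
  choose aa ha1 ha2 ha3 using step
  have ha0 : ∀ n, aa n ≠ 0 := by
    intro n h
    have := ha3 n
    rw [h] at this
    simp only [map_zero] at this
    linarith
  -- the block sequence
  set nseq : ℕ → ℕ := fun k => Nat.rec 0 (fun _ M => (aa M).support.sup id + 1) k
    with hnseq
  have hnseqS : ∀ k, nseq (k+1) = (aa (nseq k)).support.sup id + 1 := fun k => rfl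
  set A : ℕ → (ℕ →₀ 𝕜) := fun k => aa (nseq k) with hA
  have hblk : ∀ k, ∀ i ∈ (A k).support, nseq k ≤ i ∧ i < nseq (k+1) := by
    intro k i hi
    refine ⟨ha1 _ i hi, ?_⟩
    rw [hnseqS]
    have hle := Finset.le_sup (f := id) hi
    have hAk : (A k) = aa (nseq k) := rfl
    rw [hAk] at hle
    simp only [id] at hle
    omega
  have hnmono : StrictMono nseq := by
    apply strictMono_nat_of_lt_succ
    intro k
    obtain ⟨i, hi⟩ := Finsupp.support_nonempty_iff.mpr (ha0 (nseq k))
    have h1 := ha1 (nseq k) i hi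
    have h2 := Finset.le_sup (f := id) hi
    rw [hnseqS]
    simp only [id] at h2
    omega
  have hdisj : ∀ k l, k ≠ l → Disjoint (A k).support (A l).support := by
    have key : ∀ k l, k < l → Disjoint (A k).support (A l).support := by
      intro k l hkl
      rw [Finset.disjoint_left]
      intro i hik hil
      have h1 := (hblk k i hik).2
      have h2 := (hblk l i hil).1
      have h3 : nseq (k+1) ≤ nseq l := hnmono.monotone hkl
      omega
    intro k l hkl
    rcases Nat.lt_or_ge k l with h | h
    · exact key k l h
    · exact (key l k (by omega)).symm
  have hA1 : ∀ k, ‖L (A k)‖ ≤ 1 := fun k => ha2 _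
  have hre : ∀ k, ε/2 ≤ RCLike.re (f (L (A k))) := fun k => ha3 _
  have hf0 : 0 < ‖f‖ := by
    rcases eq_or_lt_of_le (norm_nonneg f) with h | h
    · exfalso
      have h0 : f = 0 := by
        rw [← norm_eq_zero]; exact h.symm
      have := hre 0
      rw [h0] at this
      simp at this
      linarith
    · exact h
  set δ : ℝ := ε/(8*(‖f‖+1)) with hδdef
  have hδ0 : 0 < δ := by positivity
  -- the witness family
  set 𝓑 : Set (Finset ℕ) := {B | ∃ g : StrongDual 𝕜 E, ‖g‖ ≤ 1 ∧ ∃ F ∈ 𝓕,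
    ∀ k ∈ B, δ ≤ ‖g (∑ i ∈ F, (A k) i • b i)‖} with h𝓑def
  have h𝓑her : XFEShrink.Hered 𝓑 := by
    rintro B ⟨g, hg, F, hF, hall⟩ B' hB'
    exact ⟨g, hg, F, hF, fun k hk => hall k (hB' hk)⟩
  have h𝓑nb : XFEShrink.NoBranch 𝓑 := by
    intro Aset hAinf
    by_contra hno
    push_neg at hno
    set p : ℕ → ℕ := fun j => ((Set.Infinite.natEmbedding Aset hAinf j : ↑Aset) : ℕ) with hp
    have hpinj : Function.Injective p := fun a c hac =>
      (Set.Infinite.natEmbedding Aset hAinf).injective (Subtype.coe_injective hac)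
    have hpA : ∀ j, p j ∈ Aset := fun j => (Set.Infinite.natEmbedding Aset hAinf j).2
    have hBq : ∀ q : ℕ, ∃ g : StrongDual 𝕜 E, ‖g‖ ≤ 1 ∧ ∃ F ∈ 𝓕,
        ∀ k ∈ Finset.image p (Finset.range (q+1)), δ ≤ ‖g (∑ i ∈ F, (A k) i • b i)‖ := by
      intro q
      apply hno
      intro x hx
      simp only [Finset.coe_image, Set.mem_image] at hx
      obtain ⟨j, -, rfl⟩ := hx
      exact hpA j
    choose gq hgq1 Fq hFq hgq2 using hBq
    have hgqk : ∀ j q : ℕ, j ≤ q → δ ≤ ‖gq q (∑ i ∈ Fq q, (A (p j)) i • b i)‖ := by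
      intro j q hjq
      exact hgq2 q (p j) (Finset.mem_image_of_mem p (Finset.mem_range.mpr (by omega : j < q + 1)))
    obtain ⟨𝒰, h𝒰⟩ := Ultrafilter.exists_le (atTop : Filter ℕ)
    have hstab : ∀ j : ℕ, ∃ G : Finset ℕ, G ⊆ (A (p j)).support ∧
        {q | Fq q ∩ (A (p j)).support = G} ∈ 𝒰 := by
      intro j
      by_contra hcon2
      push_neg at hcon2
      have hmem : ∀ G ∈ ((A (p j)).support.powerset : Finset (Finset ℕ)),
          {q | Fq q ∩ (A (p j)).support = G}ᶜ ∈ 𝒰 := by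
        intro G hG
        rw [Ultrafilter.compl_mem_iff_notMem]
        exact hcon2 G (Finset.mem_powerset.mp hG)
      have hint : (⋂ G ∈ ((A (p j)).support.powerset : Set (Finset ℕ)),
          {q | Fq q ∩ (A (p j)).support = G}ᶜ) ∈ 𝒰 :=
        (biInter_mem ((A (p j)).support.powerset.finite_toSet)).mpr
          (fun G hG => hmem G hG)
      obtain ⟨q, hq⟩ := Filter.nonempty_of_mem hint
      simp only [Set.mem_iInter, Set.mem_compl_iff, Set.mem_setOf_eq] at hq
      exact hq (Fq q ∩ (A (p j)).support)
        (by simp [Finset.mem_powerset]) rfl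
    choose Gt hGtsub hGt𝒰 using hstab
    have hGt𝓕 : ∀ j, Gt j ∈ 𝓕 := by
      intro j
      obtain ⟨q, hq⟩ := Filter.nonempty_of_mem (hGt𝒰 j)
      rw [Set.mem_setOf_eq] at hq
      exact h𝓕.2 _ (hFq q) _ (hq ▸ Finset.inter_subset_left)
    set v : ℕ → E := fun j => ∑ i ∈ Gt j, (A (p j)) i • b i with hv
    have hveq : ∀ j q, Fq q ∩ (A (p j)).support = Gt j →
        (∑ i ∈ Fq q, (A (p j)) i • b i) = v j := by
      intro j q hq
      rw [XFEShrink.sum_restrict (A (p j)) (Fq q), hq]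
    have hv1 : ∀ j, ‖v j‖ ≤ 1 := by
      intro j
      calc ‖v j‖ ≤ ‖L (A (p j))‖ := XFEShrink.normF hX _ (hGt𝓕 j)
      _ ≤ 1 := hA1 _
    have hδv : ∀ j, ∀ᶠ q in (𝒰 : Filter ℕ), δ ≤ ‖gq q (v j)‖ := by
      intro j
      have h1 : {q | Fq q ∩ (A (p j)).support = Gt j} ∈ 𝒰 := hGt𝒰 j
      have h2 : {q | j ≤ q} ∈ 𝒰 := h𝒰 (Filter.mem_atTop j)
      filter_upwards [h1, h2] with q hq1 hq2
      rw [← hveq j q hq1]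
      exact hgqk j q hq2
    rcases hyp with hshr | hcomp
    · -- case: basis of E is shrinking
      have hKcomp := WeakDual.isCompact_closedBall (𝕜 := 𝕜) (0 : StrongDual 𝕜 E) 1
      have hmemK : ∀ q, StrongDual.toWeakDual (gq q) ∈
          (⇑WeakDual.toStrongDual ⁻¹' Metric.closedBall (0 : StrongDual 𝕜 E) 1) := by
        intro q
        simp only [Set.mem_preimage]
        rw [mem_closedBall_zero_iff]
        exact hgq1 q
      obtain ⟨gW, hgWK, hlim⟩ := hKcomp.ultrafilter_le_nhds
        (𝒰.map (fun q => StrongDual.toWeakDual (gq q)))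
        (by rw [Ultrafilter.coe_map, Filter.le_principal_iff, Filter.mem_map]
            exact Filter.univ_mem' (fun q => hmemK q))
      set glim : StrongDual 𝕜 E := WeakDual.toStrongDual gW with hglim
      have hglim1 : ‖glim‖ ≤ 1 := by
        have h1 := hgWK
        rw [Set.mem_preimage, mem_closedBall_zero_iff] at h1
        exact h1
      have heval : ∀ j, Filter.Tendsto (fun q => gq q (v j)) (𝒰 : Filter ℕ)
          (nhds (glim (v j))) := by
        intro j
        have hcont : Continuous fun φ : WeakDual 𝕜 E => φ (v j) :=
          WeakDual.eval_continuous (v j)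
        have h1 : Filter.Tendsto (fun q => StrongDual.toWeakDual (gq q))
            (𝒰 : Filter ℕ) (nhds gW) := by
          rw [Filter.Tendsto, ← Ultrafilter.coe_map]
          exact hlim
        exact (hcont.tendsto gW).comp h1
      have hδlim : ∀ j, δ ≤ ‖glim (v j)‖ := fun j =>
        ge_of_tendsto ((heval j).norm) (hδv j)
      obtain ⟨h', hh'mem, hdist⟩ :=
        Metric.mem_closure_iff.mp (hshr glim) (δ/2) (by positivity)
      obtain ⟨d, hd⟩ := Finsupp.mem_span_range_iff_exists_finsupp.mp hh'mem
      set m : ℕ := d.support.sup id + 1 with hm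
      have hbig : ∃ j, m ≤ p j := by
        by_contra hsmall
        push_neg at hsmall
        have hsub : Set.range p ⊆ Set.Iio m := by
          rintro _ ⟨j, rfl⟩
          exact hsmall j
        exact (Set.infinite_range_of_injective hpinj)
          ((Set.finite_Iio m).subset hsub)
      obtain ⟨j, hj⟩ := hbig
      have hh'v : h' (v j) = 0 := by
        have hsum : h' = ∑ l ∈ d.support, d l • bs l := by rw [← hd]; rfl
        rw [hsum, ContinuousLinearMap.sum_apply]
        apply Finset.sum_eq_zero
        intro l hl
        rw [ContinuousLinearMap.smul_apply]
        have hbs : bs l (v j) = if l ∈ Gt j then (A (p j)) l else 0 :=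
          XFEShrink.dual_eval_ite hE.biortho (Gt j) (fun i => (A (p j)) i) l
        have hlm : l < m := by
          have := Finset.le_sup (f := id) hl
          simp only [id] at this
          omega
        have hnot : l ∉ Gt j := by
          intro hctr
          have h2 := (hblk (p j) l (hGtsub j hctr)).1
          have h3 : p j ≤ nseq (p j) := hnmono.le_apply
          omega
        rw [hbs, if_neg hnot, smul_zero]
      have hcontra : δ ≤ δ/2 := by
        calc δ ≤ ‖glim (v j)‖ := hδlim j
        _ = ‖(glim - h') (v j)‖ := by
            rw [ContinuousLinearMap.sub_apply, hh'v, sub_zero]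
        _ ≤ ‖glim - h'‖ * ‖v j‖ := (glim - h').le_opNorm _
        _ ≤ (δ/2) * 1 := by
            apply mul_le_mul _ (hv1 j) (norm_nonneg _) (by positivity)
            rw [← dist_eq_norm]
            exact hdist.le
        _ = δ/2 := mul_one _
      linarith
    · -- case: the family is compact
      have hGne : ∀ j, (Gt j).Nonempty := by
        intro j
        rcases Finset.eq_empty_or_nonempty (Gt j) with h | h
        · exfalso
          obtain ⟨q, hq⟩ := (hδv j).exists
          have hv0 : v j = 0 := by
            show (∑ i ∈ Gt j, (A (p j)) i • b i) = 0
            rw [h, Finset.sum_empty]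
          rw [hv0, map_zero, norm_zero] at hq
          linarith
        · exact h
      set pt : ℕ → ℕ := fun j => (Gt j).min' (hGne j) with hpt
      have hptmem : ∀ j, pt j ∈ Gt j := fun j => Finset.min'_mem _ _
      have hptsupp : ∀ j, pt j ∈ (A (p j)).support := fun j => hGtsub j (hptmem j)
      have hptinj : Function.Injective pt := by
        intro j j' hjj'
        by_contra hne
        have hpne : p j ≠ p j' := fun h => hne (hpinj h)
        have hd2 := hdisj (p j) (p j') hpne
        rw [Finset.disjoint_left] at hd2
        exact hd2 (hptsupp j) (hjj' ▸ hptsupp j')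
      have hP𝓕 : ∀ J : Finset ℕ, Finset.image pt J ∈ 𝓕 := by
        intro J
        have hT : (⋂ j ∈ (J : Set ℕ), {q | Fq q ∩ (A (p j)).support = Gt j}) ∈ 𝒰 :=
          (biInter_mem J.finite_toSet).mpr (fun j _ => hGt𝒰 j)
        obtain ⟨q, hq⟩ := Filter.nonempty_of_mem hT
        simp only [Set.mem_iInter, Set.mem_setOf_eq] at hq
        apply h𝓕.2 _ (hFq q)
        intro x hx
        obtain ⟨j, hjJ, rfl⟩ := Finset.mem_image.mp hx
        have hmem := hptmem j
        rw [← hq j hjJ] at hmem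
        exact (Finset.mem_inter.mp hmem).1
      set χ : ℕ → Bool := fun i => decide (∃ j, pt j = i) with hχ
      have hseq : Filter.Tendsto
          (fun q => (fun i => decide (i ∈ Finset.image pt (Finset.range (q+1)))))
          atTop (nhds χ) := by
        rw [tendsto_pi_nhds]
        intro i
        by_cases hmem : ∃ j, pt j = i
        · obtain ⟨j, rfl⟩ := hmem
          apply tendsto_nhds_of_eventually_eq
          filter_upwards [Filter.eventually_ge_atTop j] with q hq
          have h1 : pt j ∈ Finset.image pt (Finset.range (q+1)) :=
            Finset.mem_image_of_mem _ (Finset.mem_range.mpr (by omega))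
          have h2 : χ (pt j) = true := by
            rw [hχ]
            simp only [decide_eq_true_eq]
            exact ⟨j, rfl⟩
          rw [h2]
          simp [h1]
        · apply tendsto_nhds_of_eventually_eq
          apply Filter.Eventually.of_forall
          intro q
          have h1 : i ∉ Finset.image pt (Finset.range (q+1)) := by
            intro hctr
            obtain ⟨j, -, hji⟩ := Finset.mem_image.mp hctr
            exact hmem ⟨j, hji⟩
          have h2 : χ i = false := by
            rw [hχ]
            simp only [decide_eq_false_iff_not]
            exact hmem
          rw [h2]
          simp [h1]
      have hχmem := hcomp.mem_of_tendsto hseq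
        (Filter.Eventually.of_forall (fun q =>
          ⟨Finset.image pt (Finset.range (q+1)), hP𝓕 _, fun i => by
            simp [decide_eq_true_eq]⟩))
      obtain ⟨Ffin, hFfin, hiff⟩ := hχmem
      have hsub : Set.range pt ⊆ ↑Ffin := by
        rintro _ ⟨j, rfl⟩
        apply (hiff (pt j)).mp
        rw [hχ]
        simp only [decide_eq_true_eq]
        exact ⟨j, rfl⟩
      exact (Set.infinite_range_of_injective hptinj) (Ffin.finite_toSet.subset hsub)
  obtain ⟨s, μ, hμ0, hμvan, hμ1, hμ𝓑⟩ := XFEShrink.ptak h𝓑her h𝓑nb hδ0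
  set cc : ℕ →₀ 𝕜 := ∑ k ∈ s, (↑(μ k) : 𝕜) • A k with hcc
  have hLcc : L cc = ∑ k ∈ s, (↑(μ k) : 𝕜) • L (A k) := by
    rw [map_sum]
    apply Finset.sum_congr rfl
    intro k _
    rw [map_smul]
  have hrez : ε/2 ≤ RCLike.re (f (L cc)) := by
    rw [hLcc, map_sum]
    have : ∀ k ∈ s, f ((↑(μ k) : 𝕜) • L (A k)) = ↑(μ k) * f (L (A k)) := by
      intro k _
      rw [map_smul, smul_eq_mul]
    rw [Finset.sum_congr rfl this, map_sum]
    calc ε/2 = ∑ k ∈ s, μ k * (ε/2) := by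
          rw [← Finset.sum_mul, hμ1, one_mul]
    _ ≤ ∑ k ∈ s, RCLike.re (↑(μ k) * f (L (A k))) := by
        apply Finset.sum_le_sum
        intro k hk
        rw [RCLike.re_ofReal_mul]
        exact mul_le_mul_of_nonneg_left (hre k) (hμ0 k)
    _ = _ := rfl
  have hznorm : ‖L cc‖ ≤ 2*δ := by
    apply XFEShrink.norm_leL hX h𝓕
    intro F hF
    set u : ℕ → E := fun k => ∑ i ∈ F, (A k) i • b i with hu
    have hwF : ∑ i ∈ F, cc i • b i = ∑ k ∈ s, (↑(μ k) : 𝕜) • u k := by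
      have h1 : ∀ i, cc i = ∑ k ∈ s, (↑(μ k) : 𝕜) * (A k) i := by
        intro i
        rw [hcc, Finsupp.finset_sum_apply]
        apply Finset.sum_congr rfl
        intro k _
        rw [Finsupp.smul_apply, smul_eq_mul]
      calc ∑ i ∈ F, cc i • b i
          = ∑ i ∈ F, ∑ k ∈ s, ((↑(μ k) : 𝕜) * (A k) i) • b i := by
            apply Finset.sum_congr rfl
            intro i _
            rw [h1 i, Finset.sum_smul]
      _ = ∑ k ∈ s, ∑ i ∈ F, ((↑(μ k) : 𝕜) * (A k) i) • b i := Finset.sum_comm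
      _ = ∑ k ∈ s, (↑(μ k) : 𝕜) • u k := by
            apply Finset.sum_congr rfl
            intro k _
            rw [hu, Finset.smul_sum]
            apply Finset.sum_congr rfl
            intro i _
            rw [mul_smul]
    rw [hwF]
    by_contra hbig
    push_neg at hbig
    have hne : (∑ k ∈ s, (↑(μ k) : 𝕜) • u k) ≠ 0 := by
      intro h
      rw [h, norm_zero] at hbig
      linarith
    obtain ⟨g, hg1, hgw⟩ := exists_dual_vector 𝕜 _ (norm_ne_zero_iff.mpr hne)
    have hu1 : ∀ k, ‖u k‖ ≤ 1 := by
      intro k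
      calc ‖u k‖ ≤ ‖L (A k)‖ := XFEShrink.normF hX (A k) hF
      _ ≤ 1 := hA1 k
    have hre_sum : ‖∑ k ∈ s, (↑(μ k) : 𝕜) • u k‖
        = ∑ k ∈ s, μ k * RCLike.re (g (u k)) := by
      conv_lhs => rw [← RCLike.ofReal_re (K := 𝕜) ‖∑ k ∈ s, (↑(μ k) : 𝕜) • u k‖, ← hgw]
      rw [map_sum]
      rw [map_sum]
      apply Finset.sum_congr rfl
      intro k _
      rw [map_smul, smul_eq_mul, RCLike.re_ofReal_mul]
    set B : Finset ℕ := s.filter (fun k => δ ≤ RCLike.re (g (u k))) with hB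
    have hsplit : ∑ k ∈ s, μ k * RCLike.re (g (u k)) ≤ (∑ k ∈ B, μ k) + δ := by
      rw [← Finset.sum_filter_add_sum_filter_not s (fun k => δ ≤ RCLike.re (g (u k)))]
      apply add_le_add
      · apply Finset.sum_le_sum
        intro k hk
        have h1 : RCLike.re (g (u k)) ≤ 1 := by
          calc RCLike.re (g (u k)) ≤ ‖g (u k)‖ := RCLike.re_le_norm _
          _ ≤ ‖g‖ * ‖u k‖ := g.le_opNorm _
          _ ≤ 1 := by
              rw [hg1, one_mul]; exact hu1 k
        calc μ k * RCLike.re (g (u k)) ≤ μ k * 1 :=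
          mul_le_mul_of_nonneg_left h1 (hμ0 k)
        _ = μ k := mul_one _
      · calc ∑ k ∈ s.filter (fun k => ¬ δ ≤ RCLike.re (g (u k))), μ k * RCLike.re (g (u k))
            ≤ ∑ k ∈ s.filter (fun k => ¬ δ ≤ RCLike.re (g (u k))), μ k * δ := by
              apply Finset.sum_le_sum
              intro k hk
              have := (Finset.mem_filter.mp hk).2
              push_neg at this
              exact mul_le_mul_of_nonneg_left this.le (hμ0 k)
        _ = (∑ k ∈ s.filter (fun k => ¬ δ ≤ RCLike.re (g (u k))), μ k) * δ := by
              rw [Finset.sum_mul]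
        _ ≤ 1 * δ := by
              apply mul_le_mul_of_nonneg_right _ hδ0.le
              rw [← hμ1]
              exact Finset.sum_le_sum_of_subset_of_nonneg (Finset.filter_subset _ _)
                (fun k _ _ => hμ0 k)
        _ = δ := one_mul _
    have hBmem : B ∈ 𝓑 := by
      refine ⟨g, le_of_eq hg1, F, hF, ?_⟩
      intro k hk
      have := (Finset.mem_filter.mp hk).2
      calc δ ≤ RCLike.re (g (u k)) := this
      _ ≤ ‖g (u k)‖ := RCLike.re_le_norm _
    have hBs := hμ𝓑 B hBmem
    rw [hre_sum] at hbig
    linarith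
  -- final contradiction
  have hfinal : ε/2 ≤ ‖f‖ * (2*δ) := by
    calc ε/2 ≤ RCLike.re (f (L cc)) := hrez
    _ ≤ ‖f (L cc)‖ := RCLike.re_le_norm _
    _ ≤ ‖f‖ * ‖L cc‖ := f.le_opNorm _
    _ ≤ ‖f‖ * (2*δ) := mul_le_mul_of_nonneg_left hznorm (norm_nonneg f)
  rw [hδdef] at hfinal
  have hfin2 : ‖f‖ * (2 * (ε / (8 * (‖f‖ + 1)))) ≤ ε/4 := by
    rw [show (2:ℝ) * (ε / (8 * (‖f‖ + 1))) = ε / (4 * (‖f‖+1)) by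
        rw [eq_div_iff (by positivity)]; field_simp; ring,
      mul_div_assoc', div_le_div_iff₀ (by positivity) (by norm_num : (0:ℝ) < 4)]
    nlinarith [hε.le, hf0.le]
  linarith

end
end

section
/- Let E be a Banach space with a normalized 1-unconditional basis (𝐞_i) such that E* is strictly convex, and let 𝓕 be a combinatorial family. Then a functional x* ∈ X_{𝓕,E}^* is an extreme point of the closed unit ball of X_{𝓕,E}^* if and only if supp(x*) ∈ 𝓕̄ and ‖𝐱*‖_{E*} = 1. -/
open Filter Topology NormedSpace

noncomputable section

section
set_option linter.unusedSectionVars false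
section AuxE

variable {𝕜 : Type*} [RCLike 𝕜]
variable {E : Type*} [NormedAddCommGroup E] [NormedSpace 𝕜 E]
variable {b : ℕ → E} {bs : ℕ → StrongDual 𝕜 E}

lemma exists_unimodular_decomp (μ : 𝕜) (h : ‖μ‖ ≤ 1) :
    ∃ (u : 𝕜) (t : ℝ), ‖u‖ = 1 ∧ 0 ≤ t ∧ t ≤ 1 ∧
      ((t : 𝕜) * u + ((1 - t : ℝ) : 𝕜) * (-u)) = μ := by
  by_cases hμ : μ = 0
  · refine ⟨1, 1/2, by simp, by norm_num, by norm_num, by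
      subst hμ; push_cast; ring⟩
  · refine ⟨(‖μ‖ : 𝕜)⁻¹ * μ, (1 + ‖μ‖)/2, ?_, ?_, ?_, ?_⟩
    · rw [norm_mul, norm_inv, RCLike.norm_ofReal, abs_of_nonneg (norm_nonneg μ),
        inv_mul_cancel₀ (norm_ne_zero_iff.mpr hμ)]
    · positivity
    · linarith
    · have hne : (‖μ‖ : 𝕜) ≠ 0 := by
        simpa using norm_ne_zero_iff.mpr hμ
      push_cast
      field_simp
      ring
end AuxE

section AuxE2

variable {𝕜 : Type*} [RCLike 𝕜]
variable {E : Type*} [NormedAddCommGroup E] [NormedSpace 𝕜 E]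
variable {b : ℕ → E} {bs : ℕ → StrongDual 𝕜 E}

lemma norm_mult_le (hE : IsNUBasis 𝕜 E b bs) (c : ℕ →₀ 𝕜) (lam : ℕ → 𝕜)
    (h1 : ∀ i, ‖lam i‖ ≤ 1) :
    ‖∑ i ∈ c.support, lam i • c i • b i‖ ≤ ‖∑ i ∈ c.support, c i • b i‖ := by
  classical
  suffices H : ∀ s : Finset ℕ, ∀ lam : ℕ → 𝕜, (∀ i, ‖lam i‖ ≤ 1) →
      (∀ i ∈ c.support, i ∉ s → ‖lam i‖ = 1) →
      ‖∑ i ∈ c.support, lam i • c i • b i‖ ≤ ‖∑ i ∈ c.support, c i • b i‖ from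
    H c.support lam h1 (fun i hi hni => absurd hi hni)
  intro s
  induction s using Finset.induction_on with
  | empty =>
    intro lam h1 hu
    have hω : ∀ i, ‖(fun i => if i ∈ c.support then lam i else 1) i‖ = 1 := by
      intro i
      by_cases hi : i ∈ c.support
      · simpa [hi] using hu i hi (Finset.notMem_empty i)
      · simp [hi]
    have := hE.unconditional c _ hω
    refine le_of_eq ?_
    calc ‖∑ i ∈ c.support, lam i • c i • b i‖
        = ‖∑ i ∈ c.support, (if i ∈ c.support then lam i else 1) • c i • b i‖ := by
          refine congrArg _ (Finset.sum_congr rfl fun i hi => ?_)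
          rw [if_pos hi]
      _ = ‖∑ i ∈ c.support, c i • b i‖ := this
  | insert j s hj ih =>
    intro lam h1 hu
    by_cases hjc : j ∈ c.support
    · obtain ⟨u, t, hu1, ht0, ht1, hdec⟩ := exists_unimodular_decomp (lam j) (h1 j)
      set lam1 := Function.update lam j u with hlam1
      set lam2 := Function.update lam j (-u) with hlam2
      have key : ∑ i ∈ c.support, lam i • c i • b i
          = (t : 𝕜) • (∑ i ∈ c.support, lam1 i • c i • b i)
            + ((1 - t : ℝ) : 𝕜) • (∑ i ∈ c.support, lam2 i • c i • b i) := by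
        rw [Finset.smul_sum, Finset.smul_sum, ← Finset.sum_add_distrib]
        refine Finset.sum_congr rfl fun i _ => ?_
        by_cases hij : i = j
        · subst hij
          rw [hlam1, hlam2, Function.update_self, Function.update_self, ← hdec]
          module
        · have hone : ((t : 𝕜) + ((1 - t : ℝ) : 𝕜)) = 1 := by push_cast; ring
          rw [hlam1, hlam2, Function.update_of_ne hij, Function.update_of_ne hij,
            ← add_smul, hone, one_smul]
      have h1' : ∀ (w : 𝕜), ‖w‖ = 1 → ∀ i, ‖(Function.update lam j w) i‖ ≤ 1 := by
        intro w hw i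
        by_cases hij : i = j
        · subst hij; rw [Function.update_self, hw]
        · rw [Function.update_of_ne hij]; exact h1 i
      have hu' : ∀ (w : 𝕜), ‖w‖ = 1 →
          ∀ i ∈ c.support, i ∉ s → ‖(Function.update lam j w) i‖ = 1 := by
        intro w hw i hi his
        by_cases hij : i = j
        · subst hij; rw [Function.update_self]; exact hw
        · rw [Function.update_of_ne hij]
          exact hu i hi (by simp [hij, his])
      have I1 := ih lam1 (h1' u hu1) (hu' u hu1)
      have I2 := ih lam2 (h1' (-u) (by rw [norm_neg]; exact hu1)) (hu' (-u) (by rw [norm_neg]; exact hu1))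
      rw [key]
      calc ‖(t : 𝕜) • (∑ i ∈ c.support, lam1 i • c i • b i)
            + ((1 - t : ℝ) : 𝕜) • (∑ i ∈ c.support, lam2 i • c i • b i)‖
          ≤ t * ‖∑ i ∈ c.support, lam1 i • c i • b i‖
            + (1 - t) * ‖∑ i ∈ c.support, lam2 i • c i • b i‖ := by
            refine (norm_add_le _ _).trans ?_
            rw [norm_smul, norm_smul, RCLike.norm_ofReal, RCLike.norm_ofReal,
              abs_of_nonneg ht0, abs_of_nonneg (by linarith : (0:ℝ) ≤ 1 - t)]
        _ ≤ t * ‖∑ i ∈ c.support, c i • b i‖ + (1 - t) * ‖∑ i ∈ c.support, c i • b i‖ := by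
            gcongr <;> linarith
        _ = ‖∑ i ∈ c.support, c i • b i‖ := by ring
    · refine ih lam h1 fun i hi his => hu i hi ?_
      simp only [Finset.mem_insert, not_or]
      exact ⟨fun h => hjc (h ▸ hi), his⟩

lemma monoE (hE : IsNUBasis 𝕜 E b bs) {a c : ℕ →₀ 𝕜} (h : ∀ i, ‖a i‖ ≤ ‖c i‖) :
    ‖∑ i ∈ a.support, a i • b i‖ ≤ ‖∑ i ∈ c.support, c i • b i‖ := by
  classical
  set lam : ℕ → 𝕜 := fun i => if c i = 0 then 0 else a i / c i with hlam
  have h1 : ∀ i, ‖lam i‖ ≤ 1 := by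
    intro i
    by_cases hc : c i = 0
    · simp [hlam, hc]
    · rw [hlam]
      simp only [if_neg hc, norm_div]
      rw [div_le_one (norm_pos_iff.mpr hc)]
      exact h i
  have hsub : a.support ⊆ c.support := by
    intro i hi
    rw [Finsupp.mem_support_iff] at hi ⊢
    intro hc
    exact hi (norm_le_zero_iff.mp (by simpa [hc] using h i))
  have heq : ∑ i ∈ a.support, a i • b i = ∑ i ∈ c.support, lam i • c i • b i := by
    rw [Finset.sum_subset hsub (fun i _ hai => by
      rw [Finsupp.notMem_support_iff.mp hai, zero_smul])]
    refine Finset.sum_congr rfl fun i hi => ?_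
    have hc : c i ≠ 0 := Finsupp.mem_support_iff.mp hi
    rw [hlam]
    simp only [if_neg hc, smul_smul, div_mul_cancel₀ _ hc]
  rw [heq]
  exact norm_mult_le hE c lam h1

lemma sum_eq_filter_support {M : Type*} [AddCommGroup M] [Module 𝕜 M]
    (z : ℕ →₀ 𝕜) (F : Finset ℕ) (v : ℕ → M) :
    ∑ i ∈ F, z i • v i
      = ∑ i ∈ (z.filter (· ∈ F)).support, (z.filter (· ∈ F)) i • v i := by
  classical
  have hsub : (z.filter (· ∈ F)).support ⊆ F := by
    intro i hi
    rw [Finsupp.support_filter, Finset.mem_filter] at hi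
    exact hi.2
  calc ∑ i ∈ F, z i • v i
      = ∑ i ∈ F, (z.filter (· ∈ F)) i • v i :=
        Finset.sum_congr rfl (fun i hi => by rw [Finsupp.filter_apply_pos _ _ hi])
    _ = ∑ i ∈ (z.filter (· ∈ F)).support, (z.filter (· ∈ F)) i • v i :=
        (Finset.sum_subset hsub (fun i _ hi => by
          rw [Finsupp.notMem_support_iff.mp hi, zero_smul])).symm

lemma normF_le (hE : IsNUBasis 𝕜 E b bs) (z : ℕ →₀ 𝕜) (F : Finset ℕ) :
    ‖∑ i ∈ F, z i • b i‖ ≤ ‖∑ i ∈ z.support, z i • b i‖ := by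
  classical
  rw [sum_eq_filter_support z F b]
  refine monoE hE fun i => ?_
  rw [Finsupp.filter_apply]
  split <;> simp

lemma monoF (hE : IsNUBasis 𝕜 E b bs) {a c : ℕ →₀ 𝕜} (h : ∀ i, ‖a i‖ ≤ ‖c i‖)
    (F : Finset ℕ) :
    ‖∑ i ∈ F, a i • b i‖ ≤ ‖∑ i ∈ F, c i • b i‖ := by
  classical
  rw [sum_eq_filter_support a F b, sum_eq_filter_support c F b]
  refine monoE hE fun i => ?_
  rw [Finsupp.filter_apply, Finsupp.filter_apply]
  split <;> simp [h i]

end AuxE2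

section AuxX

variable {𝕜 : Type*} [RCLike 𝕜]
variable {E : Type*} [NormedAddCommGroup E] [NormedSpace 𝕜 E]
variable {b : ℕ → E} {bs : ℕ → StrongDual 𝕜 E}
variable {𝓕 : Set (Finset ℕ)}
variable {X : Type*} [NormedAddCommGroup X] [NormedSpace 𝕜 X]
variable {e : ℕ → X}

lemma empty_mem_fam (h𝓕 : IsCombFamily 𝓕) : ∅ ∈ 𝓕 :=
  h𝓕.2 {0} (h𝓕.1 0) ∅ (Finset.empty_subset _)

lemma single_sum {M : Type*} [AddCommGroup M] [Module 𝕜 M] (v : ℕ → M) (j : ℕ) :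
    ∑ i ∈ (Finsupp.single j (1:𝕜)).support, (Finsupp.single j (1:𝕜)) i • v i = v j := by
  classical
  rw [Finsupp.support_single_ne_zero j one_ne_zero, Finset.sum_singleton,
    Finsupp.single_eq_same, one_smul]

variable (hE : IsNUBasis 𝕜 E b bs) (h𝓕 : IsCombFamily 𝓕)
  (hX : IsXFE 𝕜 𝓕 E b X e)
include hE h𝓕 hX

lemma normX_le_normE (z : ℕ →₀ 𝕜) :
    ‖∑ i ∈ z.support, z i • e i‖ ≤ ‖∑ i ∈ z.support, z i • b i‖ := by
  rw [hX.norm_eq]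
  refine csSup_le ⟨_, ∅, empty_mem_fam h𝓕, rfl⟩ ?_
  rintro r ⟨F, _, rfl⟩
  exact normF_le hE z F

lemma le_normX (z : ℕ →₀ 𝕜) {F : Finset ℕ} (hF : F ∈ 𝓕) :
    ‖∑ i ∈ F, z i • b i‖ ≤ ‖∑ i ∈ z.support, z i • e i‖ := by
  rw [hX.norm_eq]
  refine le_csSup ⟨‖∑ i ∈ z.support, z i • b i‖, ?_⟩ ⟨F, hF, rfl⟩
  rintro r ⟨F', _, rfl⟩
  exact normF_le hE z F'

lemma coord_le_normX (z : ℕ →₀ 𝕜) (i : ℕ) :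
    ‖z i‖ ≤ ‖∑ j ∈ z.support, z j • e j‖ := by
  have := le_normX hE h𝓕 hX z (h𝓕.1 i)
  rw [Finset.sum_singleton, norm_smul, hE.normalized i, mul_one] at this
  exact this

lemma monoX {a c : ℕ →₀ 𝕜} (h : ∀ i, ‖a i‖ ≤ ‖c i‖) :
    ‖∑ i ∈ a.support, a i • e i‖ ≤ ‖∑ i ∈ c.support, c i • e i‖ := by
  rw [hX.norm_eq a]
  refine csSup_le ⟨_, ∅, empty_mem_fam h𝓕, rfl⟩ ?_
  rintro r ⟨F, hF, rfl⟩
  exact (monoF hE h F).trans (le_normX hE h𝓕 hX c hF)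

lemma linearCombination_eq_sum (z : ℕ →₀ 𝕜) :
    Finsupp.linearCombination 𝕜 e z = ∑ i ∈ z.support, z i • e i := by
  rw [Finsupp.linearCombination_apply]
  rfl

omit hE h𝓕 hX in
lemma linearCombination_eq_sumE (z : ℕ →₀ 𝕜) :
    Finsupp.linearCombination 𝕜 b z = ∑ i ∈ z.support, z i • b i := by
  rw [Finsupp.linearCombination_apply]
  rfl

lemma sigmaX_inj : Function.Injective (Finsupp.linearCombination 𝕜 e) := by
  have hz : ∀ z : ℕ →₀ 𝕜, Finsupp.linearCombination 𝕜 e z = 0 → z = 0 := by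
    intro z hz
    ext i
    have := coord_le_normX hE h𝓕 hX z i
    rw [← linearCombination_eq_sum hE h𝓕 hX, hz, norm_zero] at this
    simpa using norm_le_zero_iff.mp this
  intro z w h
  have := hz (z - w) (by rw [map_sub, h, sub_self])
  exact sub_eq_zero.mp this

lemma dense_range_sigmaX :
    Dense ((LinearMap.range (Finsupp.linearCombination 𝕜 e) : Submodule 𝕜 X) : Set X) := by
  rw [Finsupp.range_linearCombination]
  exact hX.dense_span

lemma dense_closed_prop {s : Set X} (hclosed : IsClosed s)
    (h : ∀ z : ℕ →₀ 𝕜, (∑ i ∈ z.support, z i • e i) ∈ s) : ∀ x : X, x ∈ s := by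
  intro x
  have hd := dense_range_sigmaX hE h𝓕 hX
  have hsub : ((LinearMap.range (Finsupp.linearCombination 𝕜 e) : Submodule 𝕜 X) : Set X) ⊆ s := by
    rintro _ ⟨z, rfl⟩
    rw [linearCombination_eq_sum hE h𝓕 hX]
    exact h z
  have := closure_minimal hsub hclosed
  exact this (hd x)

lemma exists_coord (i : ℕ) : ∃ f : StrongDual 𝕜 X, ‖f‖ ≤ 1 ∧
    ∀ z : ℕ →₀ 𝕜, f (∑ j ∈ z.support, z j • e j) = z i := by
  classical
  set σ : (ℕ →₀ 𝕜) →ₗ[𝕜] X := Finsupp.linearCombination 𝕜 e with hσ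
  have hinj : Function.Injective σ := sigmaX_inj hE h𝓕 hX
  set p : Submodule 𝕜 X := LinearMap.range σ with hp
  set eqv : (ℕ →₀ 𝕜) ≃ₗ[𝕜] p := LinearEquiv.ofInjective σ hinj with heqv
  set f0 : p →ₗ[𝕜] 𝕜 := (Finsupp.lapply i) ∘ₗ (eqv.symm : p →ₗ[𝕜] (ℕ →₀ 𝕜)) with hf0
  have hval : ∀ z : ℕ →₀ 𝕜, f0 ⟨σ z, LinearMap.mem_range_self σ z⟩ = z i := by
    intro z
    have h1 : eqv.symm ⟨σ z, LinearMap.mem_range_self σ z⟩ = z := by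
      apply hinj
      rw [heqv, LinearEquiv.ofInjective_symm_apply]
    simp only [hf0, LinearMap.coe_comp, Function.comp_apply, LinearEquiv.coe_coe]
    rw [h1]
    rfl
  have hbound : ∀ y : p, ‖f0 y‖ ≤ 1 * ‖y‖ := by
    rintro ⟨y, hy⟩
    obtain ⟨z, rfl⟩ := hy
    rw [hval z, one_mul]
    have : ‖(⟨σ z, LinearMap.mem_range_self σ z⟩ : p)‖ = ‖σ z‖ := rfl
    rw [this, hσ, linearCombination_eq_sum hE h𝓕 hX]
    exact coord_le_normX hE h𝓕 hX z i
  set f1 := LinearMap.mkContinuous f0 1 hbound with hf1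
  obtain ⟨g, hg, hgnorm⟩ := exists_extension_norm_eq p f1
  refine ⟨g, ?_, ?_⟩
  · rw [hgnorm]
    exact LinearMap.mkContinuous_norm_le f0 zero_le_one hbound
  · intro z
    have hmem : (∑ j ∈ z.support, z j • e j) = σ z :=
      (linearCombination_eq_sum hE h𝓕 hX z).symm
    rw [hmem]
    have := hg ⟨σ z, LinearMap.mem_range_self σ z⟩
    rw [Submodule.coe_mk] at this
    rw [this, hf1, LinearMap.mkContinuous_apply, hval z]

end AuxX

section AuxD

variable {𝕜 : Type*} [RCLike 𝕜]
variable {E : Type*} [NormedAddCommGroup E] [NormedSpace 𝕜 E]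
variable {b : ℕ → E} {bs : ℕ → StrongDual 𝕜 E}
variable {𝓕 : Set (Finset ℕ)}
variable {X : Type*} [NormedAddCommGroup X] [NormedSpace 𝕜 X]
variable {e : ℕ → X}

lemma dense_span_b (hE : IsNUBasis 𝕜 E b bs) :
    Dense ((Submodule.span 𝕜 (Set.range b) : Submodule 𝕜 E) : Set E) := by
  intro x
  refine mem_closure_of_tendsto (hE.expansion x) (Filter.Eventually.of_forall fun N => ?_)
  exact Submodule.sum_mem _ fun i _ =>
    Submodule.smul_mem _ _ (Submodule.subset_span ⟨i, rfl⟩)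

lemma dense_closed_prop_E (hE : IsNUBasis 𝕜 E b bs) {s : Set E} (hclosed : IsClosed s)
    (h : ∀ z : ℕ →₀ 𝕜, (∑ i ∈ z.support, z i • b i) ∈ s) : ∀ w : E, w ∈ s := by
  intro w
  have hsub : ((Submodule.span 𝕜 (Set.range b) : Submodule 𝕜 E) : Set E) ⊆ s := by
    intro y hy
    obtain ⟨z, rfl⟩ := Finsupp.mem_span_range_iff_exists_finsupp.mp hy
    exact h z
  exact closure_minimal hsub hclosed (dense_span_b hE w)

variable (hE : IsNUBasis 𝕜 E b bs) (h𝓕 : IsCombFamily 𝓕)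
  (hX : IsXFE 𝕜 𝓕 E b X e)
include hE h𝓕 hX

/-- The pairing identity on finitely supported vectors. -/
lemma pairing_eq (xs : StrongDual 𝕜 X) (Xs : StrongDual 𝕜 E) (hXs : ∀ i, Xs (b i) = xs (e i))
    (z : ℕ →₀ 𝕜) :
    Xs (∑ i ∈ z.support, z i • b i) = xs (∑ i ∈ z.support, z i • e i) := by
  rw [map_sum, map_sum]
  refine Finset.sum_congr rfl fun i _ => ?_
  rw [map_smul, map_smul, hXs i]

lemma Xs_norm_le (xs : StrongDual 𝕜 X) (Xs : StrongDual 𝕜 E) (hXs : ∀ i, Xs (b i) = xs (e i)) :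
    ‖Xs‖ ≤ ‖xs‖ := by
  refine ContinuousLinearMap.opNorm_le_bound Xs (norm_nonneg xs) ?_
  have hclosed : IsClosed {w : E | ‖Xs w‖ ≤ ‖xs‖ * ‖w‖} :=
    isClosed_le (Xs.continuous.norm) (continuous_const.mul continuous_norm)
  refine dense_closed_prop_E hE hclosed fun z => ?_
  show ‖Xs (∑ i ∈ z.support, z i • b i)‖ ≤ ‖xs‖ * ‖∑ i ∈ z.support, z i • b i‖
  rw [pairing_eq hE h𝓕 hX xs Xs hXs z]
  calc ‖xs (∑ i ∈ z.support, z i • e i)‖ ≤ ‖xs‖ * ‖∑ i ∈ z.support, z i • e i‖ :=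
        xs.le_opNorm _
    _ ≤ ‖xs‖ * ‖∑ i ∈ z.support, z i • b i‖ := by
        gcongr
        exact normX_le_normE hE h𝓕 hX z

lemma xs_norm_le_Xs (xs : StrongDual 𝕜 X) (Xs : StrongDual 𝕜 E) (hXs : ∀ i, Xs (b i) = xs (e i))
    (hA : {i : ℕ | xs (e i) ≠ 0} ∈ famClosure 𝓕) :
    ‖xs‖ ≤ ‖Xs‖ := by
  classical
  refine ContinuousLinearMap.opNorm_le_bound xs (norm_nonneg Xs) ?_
  have hclosed : IsClosed {x : X | ‖xs x‖ ≤ ‖Xs‖ * ‖x‖} :=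
    isClosed_le (xs.continuous.norm) (continuous_const.mul continuous_norm)
  refine dense_closed_prop hE h𝓕 hX hclosed fun z => ?_
  show ‖xs (∑ i ∈ z.support, z i • e i)‖ ≤ ‖Xs‖ * ‖∑ i ∈ z.support, z i • e i‖
  set Gz : Finset ℕ := z.support.filter (fun i => xs (e i) ≠ 0) with hGz
  have hGz𝓕 : Gz ∈ 𝓕 := by
    refine hA Gz ?_
    intro i hi
    rw [hGz] at hi
    simp only [Finset.coe_filter, Set.mem_setOf_eq] at hi
    exact hi.2
  have hval : xs (∑ i ∈ z.support, z i • e i) = Xs (∑ i ∈ Gz, z i • b i) := by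
    rw [map_sum, map_sum]
    rw [← Finset.sum_filter_of_ne (f := fun i => xs (z i • e i))
      (p := fun i => xs (e i) ≠ 0) (by
        intro i _ hne hzero
        refine hne ?_
        show xs (z i • e i) = 0
        rw [map_smul, hzero, smul_zero])]
    refine Finset.sum_congr rfl fun i _ => ?_
    rw [map_smul, map_smul, hXs i]
  rw [hval]
  calc ‖Xs (∑ i ∈ Gz, z i • b i)‖ ≤ ‖Xs‖ * ‖∑ i ∈ Gz, z i • b i‖ := Xs.le_opNorm _
    _ ≤ ‖Xs‖ * ‖∑ i ∈ z.support, z i • e i‖ := by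
        gcongr
        exact le_normX hE h𝓕 hX z hGz𝓕

lemma exists_T [CompleteSpace X] : ∃ T : E →L[𝕜] X, ‖T‖ ≤ 1 ∧ ∀ i, T (b i) = e i := by
  classical
  set σE : (ℕ →₀ 𝕜) →ₗ[𝕜] E := Finsupp.linearCombination 𝕜 b with hσE
  have hinj : Function.Injective σE := by
    have hker : ∀ z : ℕ →₀ 𝕜, σE z = 0 → z = 0 := by
      intro z hz
      ext i
      have : bs i (σE z) = z i := by
        rw [hσE, linearCombination_eq_sumE, map_sum]
        rw [Finset.sum_eq_single i]
        · rw [map_smul, hE.biortho i i, if_pos rfl, smul_eq_mul, mul_one]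
        · intro j _ hji
          rw [map_smul, hE.biortho i j, if_neg (Ne.symm hji), smul_zero]
        · intro hi
          rw [Finsupp.notMem_support_iff.mp hi, zero_smul, map_zero]
      rw [hz, map_zero] at this
      simp [← this]
    intro z w h
    exact sub_eq_zero.mp (hker (z - w) (by rw [map_sub, h, sub_self]))
  set p : Submodule 𝕜 E := LinearMap.range σE with hp
  set eqv : (ℕ →₀ 𝕜) ≃ₗ[𝕜] p := LinearEquiv.ofInjective σE hinj with heqv
  set T0l : p →ₗ[𝕜] X := (Finsupp.linearCombination 𝕜 e) ∘ₗ (eqv.symm : p →ₗ[𝕜] (ℕ →₀ 𝕜))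
    with hT0l
  have hval : ∀ z : ℕ →₀ 𝕜, T0l ⟨σE z, LinearMap.mem_range_self σE z⟩
      = Finsupp.linearCombination 𝕜 e z := by
    intro z
    have h1 : eqv.symm ⟨σE z, LinearMap.mem_range_self σE z⟩ = z := by
      apply hinj
      rw [heqv, LinearEquiv.ofInjective_symm_apply]
    simp only [hT0l, LinearMap.coe_comp, Function.comp_apply, LinearEquiv.coe_coe]
    rw [h1]
  have hbound : ∀ y : p, ‖T0l y‖ ≤ 1 * ‖y‖ := by
    rintro ⟨y, hy⟩
    obtain ⟨z, rfl⟩ := hy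
    rw [hval z, one_mul]
    have hco : ‖(⟨σE z, LinearMap.mem_range_self σE z⟩ : p)‖ = ‖σE z‖ := rfl
    rw [hco, hσE, linearCombination_eq_sum hE h𝓕 hX, linearCombination_eq_sumE]
    exact normX_le_normE hE h𝓕 hX z
  set T0 := LinearMap.mkContinuous T0l 1 hbound with hT0
  have hd : DenseRange (p.subtypeL) := by
    have : Set.range (p.subtypeL) = (p : Set E) := Subtype.range_coe
    rw [DenseRange, this, hp, hσE, Finsupp.range_linearCombination]
    exact dense_span_b hE
  have h_e : ∀ y : p, ‖y‖ ≤ (1 : NNReal) * ‖p.subtypeL y‖ := by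
    intro y
    rw [NNReal.coe_one, one_mul]
    rfl
  refine ⟨T0.extend p.subtypeL, ?_, ?_⟩
  · have := ContinuousLinearMap.opNorm_extend_le T0 hd h_e
    refine this.trans ?_
    rw [NNReal.coe_one, one_mul]
    exact (LinearMap.mkContinuous_norm_le T0l zero_le_one hbound)
  · intro i
    have hmem : b i ∈ p := by
      refine ⟨Finsupp.single i 1, ?_⟩
      rw [hσE, linearCombination_eq_sumE, single_sum]
    have heq : p.subtypeL ⟨b i, hmem⟩ = b i := rfl
    rw [← heq, ContinuousLinearMap.extend_eq _ hd
      (ContinuousLinearMap.isUniformEmbedding_of_bound _ h_e).isUniformInducing]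
    have hbi : (⟨b i, hmem⟩ : p) = ⟨σE (Finsupp.single i 1),
        LinearMap.mem_range_self σE (Finsupp.single i 1)⟩ := by
      apply Subtype.ext
      show b i = σE (Finsupp.single i 1)
      rw [hσE, linearCombination_eq_sumE, single_sum]
    rw [hT0]
    rw [LinearMap.mkContinuous_apply, hbi, hval]
    rw [linearCombination_eq_sum hE h𝓕 hX, single_sum]

end AuxD

section AuxL1

variable {𝕜 : Type*} [RCLike 𝕜]
variable {X : Type*} [NormedAddCommGroup X] [NormedSpace 𝕜 X]

/-- The continuous linear insertion into slot `k` of a finite product. -/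
noncomputable def singleCLM (ι : Type*) [Fintype ι] [DecidableEq ι] (𝕜 X : Type*)
    [RCLike 𝕜] [NormedAddCommGroup X] [NormedSpace 𝕜 X] (k : ι) : X →L[𝕜] (ι → X) :=
  (LinearMap.single (R := 𝕜) (φ := fun _ : ι => X) k).mkContinuous 1 (fun x => by
    rw [one_mul, LinearMap.coe_single]
    exact le_of_eq (Pi.norm_single (G := fun _ : ι => X) x))

lemma singleCLM_apply {ι : Type*} [Fintype ι] [DecidableEq ι] (k : ι) (x : X) :
    singleCLM ι 𝕜 X k x = Pi.single k x := rfl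

lemma l1_bound {ι : Type*} [Fintype ι] [DecidableEq ι] (g : (ι → X) →L[𝕜] 𝕜) :
    ∑ k : ι, ‖g.comp (singleCLM ι 𝕜 X k)‖ ≤ ‖g‖ := by
  classical
  refine le_of_forall_pos_le_add fun ε hε => ?_
  set n : ℝ := (Fintype.card ι : ℝ) with hn
  set ε' : ℝ := ε / (n + 1) with hε'
  have hn0 : (0:ℝ) ≤ n := Nat.cast_nonneg _
  have hε'pos : 0 < ε' := by positivity
  set h : ι → (X →L[𝕜] 𝕜) := fun k => g.comp (singleCLM ι 𝕜 X k) with hh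
  have hx : ∀ k : ι, ∃ x : X, ‖x‖ ≤ 1 ∧ ‖h k‖ ≤ ‖(h k) x‖ + ε' := by
    intro k
    by_cases hhk : ‖h k‖ ≤ ε'
    · exact ⟨0, by simp, by simpa using hhk⟩
    · push_neg at hhk
      obtain ⟨x, hx1, hx2⟩ := ContinuousLinearMap.exists_lt_apply_of_lt_opNorm (h k)
        (show ‖h k‖ - ε' < ‖h k‖ by linarith)
      exact ⟨x, hx1.le, by linarith⟩
  choose x hx1 hx2 using hx
  set θ : ι → 𝕜 := fun k => if (h k) (x k) = 0 then 1
    else (‖(h k) (x k)‖ : 𝕜) / ((h k) (x k)) with hθ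
  have hθ1 : ∀ k, ‖θ k‖ ≤ 1 := by
    intro k
    simp only [hθ]
    split
    · simp
    · rename_i hne
      rw [norm_div, RCLike.norm_ofReal, abs_of_nonneg (norm_nonneg _),
        div_self (norm_ne_zero_iff.mpr hne)]
  have hval : ∀ k, (h k) (θ k • x k) = ((‖(h k) (x k)‖ : ℝ) : 𝕜) := by
    intro k
    rw [map_smul, smul_eq_mul]
    simp only [hθ]
    split
    · rename_i hzero
      rw [hzero, mul_zero, norm_zero]
      simp
    · rename_i hne
      rw [div_mul_cancel₀ _ hne]
  set w : ι → X := fun k => θ k • x k with hw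
  have hwnorm : ‖w‖ ≤ 1 := by
    refine (pi_norm_le_iff_of_nonneg zero_le_one).mpr fun k => ?_
    rw [hw, norm_smul]
    calc ‖θ k‖ * ‖x k‖ ≤ 1 * 1 := by
          exact mul_le_mul (hθ1 k) (hx1 k) (norm_nonneg _) zero_le_one
      _ = 1 := one_mul 1
  have hgw : g w = ((∑ k, ‖(h k) (x k)‖ : ℝ) : 𝕜) := by
    conv_lhs => rw [← Finset.univ_sum_single w]
    rw [map_sum]
    rw [RCLike.ofReal_sum]
    refine Finset.sum_congr rfl fun k _ => ?_
    exact hval k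
  have hsum : ∑ k, ‖(h k) (x k)‖ ≤ ‖g‖ := by
    have h1 : ‖g w‖ = ∑ k, ‖(h k) (x k)‖ := by
      rw [hgw, RCLike.norm_ofReal,
        abs_of_nonneg (Finset.sum_nonneg fun k _ => norm_nonneg _)]
    rw [← h1]
    calc ‖g w‖ ≤ ‖g‖ * ‖w‖ := g.le_opNorm w
      _ ≤ ‖g‖ * 1 := mul_le_mul_of_nonneg_left hwnorm (norm_nonneg g)
      _ = ‖g‖ := mul_one _
  calc ∑ k, ‖h k‖ ≤ ∑ k, (‖(h k) (x k)‖ + ε') := Finset.sum_le_sum fun k _ => hx2 k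
    _ = (∑ k, ‖(h k) (x k)‖) + n * ε' := by
        rw [Finset.sum_add_distrib, Finset.sum_const, nsmul_eq_mul, Finset.card_univ, hn]
    _ ≤ ‖g‖ + n * ε' := by linarith
    _ ≤ ‖g‖ + ε := by
        have hpos : (0:ℝ) < n + 1 := by linarith
        have hq : n / (n+1) ≤ 1 := (div_le_one hpos).mpr (by linarith)
        have hle : n * ε' ≤ ε := by
          calc n * ε' = ε * (n / (n+1)) := by rw [hε']; ring
            _ ≤ ε * 1 := mul_le_mul_of_nonneg_left hq hε.le
            _ = ε := mul_one _
        linarith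

end AuxL1

section AuxExtreme

variable {𝕜 : Type*} [RCLike 𝕜]
variable {Y : Type*} [NormedAddCommGroup Y] [NormedSpace 𝕜 Y]

lemma extreme_convex_comb {ι : Type*} {x : Y} (hx : IsExtremePtBall x)
    (s : Finset ι) (t : ι → ℝ) (c : ι → Y) (hpos : ∀ k ∈ s, 0 < t k)
    (hsum : ∑ k ∈ s, t k = 1) (hc : ∀ k ∈ s, ‖c k‖ ≤ 1)
    (hdec : ∑ k ∈ s, ((t k : ℝ) : 𝕜) • c k = x) :
    ∀ k ∈ s, c k = x := by
  classical
  induction s using Finset.induction_on generalizing t with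
  | empty => intro k hk; exact absurd hk (Finset.notMem_empty k)
  | insert j s hj ih =>
    rw [Finset.sum_insert hj] at hsum hdec
    set T : ℝ := ∑ k ∈ s, t k with hT
    have hT0 : 0 ≤ T := Finset.sum_nonneg fun k hk =>
      (hpos k (Finset.mem_insert_of_mem hk)).le
    have htj : 0 < t j := hpos j (Finset.mem_insert_self j s)
    rcases eq_or_lt_of_le hT0 with hTz | hTpos
    · -- T = 0 : all other coefficients vanish, s must contribute nothing
      have hszero : ∀ k ∈ s, t k = 0 := by
        intro k hk
        have := (Finset.sum_eq_zero_iff_of_nonneg fun k hk =>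
          (hpos k (Finset.mem_insert_of_mem hk)).le).mp hTz.symm
        exact this k hk
      have htj1 : t j = 1 := by linarith [hsum, hTz]
      intro k hk
      rcases Finset.mem_insert.mp hk with rfl | hk'
      · have hz : ∑ kk ∈ s, ((t kk : ℝ) : 𝕜) • c kk = 0 := by
          refine Finset.sum_eq_zero fun kk hkk => ?_
          rw [hszero kk hkk]
          simp
        rw [hz, add_zero, htj1] at hdec
        rw [← hdec]
        norm_num
      · exact absurd (hszero k hk') (ne_of_gt (hpos k (Finset.mem_insert_of_mem hk')))
    · -- T > 0
      set y : Y := ((T : ℝ) : 𝕜)⁻¹ • ∑ k ∈ s, ((t k : ℝ) : 𝕜) • c k with hy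
      have hTne : ((T : ℝ) : 𝕜) ≠ 0 := by
        simp only [ne_eq, RCLike.ofReal_eq_zero]
        exact ne_of_gt hTpos
      have hyn : ‖y‖ ≤ 1 := by
        rw [hy, norm_smul, norm_inv, RCLike.norm_ofReal, abs_of_pos hTpos]
        rw [inv_mul_le_iff₀ hTpos, mul_one]
        calc ‖∑ k ∈ s, ((t k : ℝ) : 𝕜) • c k‖ ≤ ∑ k ∈ s, ‖((t k : ℝ) : 𝕜) • c k‖ :=
              norm_sum_le _ _
          _ ≤ ∑ k ∈ s, t k := by
              refine Finset.sum_le_sum fun k hk => ?_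
              rw [norm_smul, RCLike.norm_ofReal,
                abs_of_pos (hpos k (Finset.mem_insert_of_mem hk))]
              calc t k * ‖c k‖ ≤ t k * 1 :=
                    mul_le_mul_of_nonneg_left (hc k (Finset.mem_insert_of_mem hk))
                      (hpos k (Finset.mem_insert_of_mem hk)).le
                _ = t k := mul_one _
          _ = T := hT.symm
      have hxdec : x = ((t j : ℝ) : 𝕜) • c j + ((T : ℝ) : 𝕜) • y := by
        rw [hy, smul_smul, mul_inv_cancel₀ hTne, one_smul, ← hdec]
      set m : ℝ := min (t j) T with hm
      have hm0 : 0 < m := lt_min htj hTpos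
      set d : Y := ((m : ℝ) : 𝕜) • (c j - y) with hd
      have hu : ‖x + d‖ ≤ 1 := by
        have : x + d = (((t j + m : ℝ)) : 𝕜) • c j + (((T - m : ℝ)) : 𝕜) • y := by
          rw [hxdec, hd]; push_cast; module
        rw [this]
        calc ‖(((t j + m : ℝ)) : 𝕜) • c j + (((T - m : ℝ)) : 𝕜) • y‖
            ≤ (t j + m) * ‖c j‖ + (T - m) * ‖y‖ := by
              refine (norm_add_le _ _).trans ?_
              rw [norm_smul, norm_smul, RCLike.norm_ofReal, RCLike.norm_ofReal,
                abs_of_pos (by linarith), abs_of_nonneg (by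
                  have : m ≤ T := min_le_right _ _
                  linarith)]
          _ ≤ (t j + m) * 1 + (T - m) * 1 := by
              have h1 : m ≤ T := min_le_right _ _
              exact add_le_add
                (mul_le_mul_of_nonneg_left (hc j (Finset.mem_insert_self j s)) (by linarith))
                (mul_le_mul_of_nonneg_left hyn (by linarith))
          _ = 1 := by rw [mul_one, mul_one]; linarith [hsum]
      have hv : ‖x - d‖ ≤ 1 := by
        have : x - d = (((t j - m : ℝ)) : 𝕜) • c j + (((T + m : ℝ)) : 𝕜) • y := by
          rw [hxdec, hd]; push_cast; module
        rw [this]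
        calc ‖(((t j - m : ℝ)) : 𝕜) • c j + (((T + m : ℝ)) : 𝕜) • y‖
            ≤ (t j - m) * ‖c j‖ + (T + m) * ‖y‖ := by
              refine (norm_add_le _ _).trans ?_
              rw [norm_smul, norm_smul, RCLike.norm_ofReal, RCLike.norm_ofReal,
                abs_of_nonneg (by
                  have : m ≤ t j := min_le_left _ _
                  linarith), abs_of_pos (by linarith)]
          _ ≤ (t j - m) * 1 + (T + m) * 1 := by
              have h1 : m ≤ t j := min_le_left _ _
              exact add_le_add
                (mul_le_mul_of_nonneg_left (hc j (Finset.mem_insert_self j s)) (by linarith))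
                (mul_le_mul_of_nonneg_left hyn (by linarith))
          _ = 1 := by rw [mul_one, mul_one]; linarith [hsum]
      have hmid := hx.2 (x + d) (x - d) hu hv (by abel)
      have hdzero : d = 0 := by
        have := hmid.1
        have h2 : x + d = x + 0 := by rw [add_zero]; exact this
        exact add_left_cancel h2
      have hcy : c j = y := by
        have hmne : ((m : ℝ) : 𝕜) ≠ 0 := by
          simp only [ne_eq, RCLike.ofReal_eq_zero]
          exact ne_of_gt hm0
        rcases smul_eq_zero.mp (hd ▸ hdzero) with h | h
        · exact absurd h hmne
        · exact sub_eq_zero.mp h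
      have hcjx : c j = x := by
        rw [hxdec, ← hcy, ← add_smul]
        have : ((t j : ℝ) : 𝕜) + ((T : ℝ) : 𝕜) = 1 := by
          push_cast
          rw [← RCLike.ofReal_add]
          rw [show t j + T = 1 from by linarith [hsum]]
          simp
        rw [this, one_smul]
      intro k hk
      rcases Finset.mem_insert.mp hk with rfl | hk'
      · exact hcjx
      · refine ih (fun k => t k / T) ?_ ?_ ?_ ?_ k hk'
        · intro k hk
          exact div_pos (hpos k (Finset.mem_insert_of_mem hk)) hTpos
        · rw [← Finset.sum_div, ← hT, div_self (ne_of_gt hTpos)]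
        · exact fun k hk => hc k (Finset.mem_insert_of_mem hk)
        · rw [← hcjx, hcy, hy, Finset.smul_sum]
          refine Finset.sum_congr rfl fun k _ => ?_
          rw [smul_smul]
          congr 1
          push_cast
          rw [div_eq_inv_mul]

end AuxExtreme

section AuxMain

variable {𝕜 : Type*} [RCLike 𝕜]
variable {E : Type*} [NormedAddCommGroup E] [NormedSpace 𝕜 E]
variable {b : ℕ → E} {bs : ℕ → StrongDual 𝕜 E}
variable {𝓕 : Set (Finset ℕ)}
variable {X : Type*} [NormedAddCommGroup X] [NormedSpace 𝕜 X]
variable {e : ℕ → X}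

lemma erase_sum {M : Type*} [AddCommGroup M] [Module 𝕜 M] (z : ℕ →₀ 𝕜) (k : ℕ) (v : ℕ → M) :
    ∑ i ∈ (z.erase k).support, (z.erase k) i • v i
      = (∑ i ∈ z.support, z i • v i) - z k • v k := by
  classical
  rw [Finsupp.support_erase]
  have hcong : ∀ s' : Finset ℕ, (∀ i ∈ s', i ≠ k) →
      ∑ i ∈ s', (z.erase k) i • v i = ∑ i ∈ s', z i • v i :=
    fun s' h => Finset.sum_congr rfl fun i hi => by rw [Finsupp.erase_ne (h i hi)]
  by_cases hk : k ∈ z.support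
  · rw [hcong (z.support.erase k) (fun i hi => Finset.ne_of_mem_erase hi)]
    rw [Finset.sum_erase_eq_sub hk]
  · rw [Finset.erase_eq_of_notMem hk, Finsupp.notMem_support_iff.mp hk, zero_smul,
      sub_zero]
    exact hcong z.support (fun i hi h => hk (h ▸ hi))

variable (hE : IsNUBasis 𝕜 E b bs) (h𝓕 : IsCombFamily 𝓕)
  (hX : IsXFE 𝕜 𝓕 E b X e)
include hE h𝓕 hX

lemma extreme_norm_one (xs : StrongDual 𝕜 X) (hext : IsExtremePtBall xs) : ‖xs‖ = 1 := by
  obtain ⟨f, hf1, hf2⟩ := exists_coord hE h𝓕 hX 0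
  have hfe : f (e 0) = 1 := by
    have h := hf2 (Finsupp.single 0 (1:𝕜))
    rw [single_sum] at h
    rw [h, Finsupp.single_eq_same]
  by_contra hne
  have hlt : ‖xs‖ < 1 := lt_of_le_of_ne hext.1 hne
  set r : ℝ := 1 - ‖xs‖ with hr
  have hrpos : 0 < r := by rw [hr]; linarith
  have hfn : ‖((r : ℝ) : 𝕜) • f‖ ≤ r := by
    rw [norm_smul, RCLike.norm_ofReal, abs_of_pos hrpos]
    calc r * ‖f‖ ≤ r * 1 := mul_le_mul_of_nonneg_left hf1 hrpos.le
      _ = r := mul_one r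
  have hu : ‖xs + ((r : ℝ) : 𝕜) • f‖ ≤ 1 := by
    refine (norm_add_le _ _).trans ?_
    rw [hr] at hfn ⊢
    linarith [hfn]
  have hv : ‖xs - ((r : ℝ) : 𝕜) • f‖ ≤ 1 := by
    refine (norm_sub_le _ _).trans ?_
    rw [hr] at hfn ⊢
    linarith [hfn]
  have hmid := hext.2 _ _ hu hv (by abel)
  have hzero : ((r : ℝ) : 𝕜) • f = 0 := by
    have h1 := hmid.1
    have h2 : xs + ((r : ℝ) : 𝕜) • f = xs + 0 := by rw [add_zero]; exact h1
    exact add_left_cancel h2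
  have happ := congrArg (fun h : StrongDual 𝕜 X => h (e 0)) hzero
  simp only [ContinuousLinearMap.smul_apply, ContinuousLinearMap.zero_apply, hfe,
    smul_eq_mul, mul_one] at happ
  rw [RCLike.ofReal_eq_zero] at happ
  exact hrpos.ne' happ

lemma mem_fam_of_extreme [CompleteSpace X]
    (xs : StrongDual 𝕜 X) (hext : IsExtremePtBall xs)
    (G : Finset ℕ) (hGsupp : ∀ k ∈ G, xs (e k) ≠ 0) : G ∈ 𝓕 := by
  classical
  have hxs1 : ‖xs‖ = 1 := extreme_norm_one hE h𝓕 hX xs hext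
  by_contra hG
  choose es hes1 hes2 using fun i => exists_coord hE h𝓕 hX i
  set D : ℕ → X →L[𝕜] X :=
    fun k => ContinuousLinearMap.id 𝕜 X - (es k).smulRight (e k) with hD
  have hDval : ∀ (k : ℕ) (z : ℕ →₀ 𝕜), D k (∑ i ∈ z.support, z i • e i)
      = ∑ i ∈ (z.erase k).support, (z.erase k) i • e i := by
    intro k z
    rw [erase_sum]
    simp only [hD, ContinuousLinearMap.sub_apply, ContinuousLinearMap.id_apply,
      ContinuousLinearMap.smulRight_apply]
    rw [hes2 k z]
  have hDle : ∀ (k : ℕ) (x : X), ‖D k x‖ ≤ ‖x‖ := by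
    intro k
    have hclosed : IsClosed {x : X | ‖D k x‖ ≤ ‖x‖} :=
      isClosed_le ((D k).continuous.norm) continuous_norm
    refine dense_closed_prop hE h𝓕 hX hclosed fun z => ?_
    show ‖D k (∑ i ∈ z.support, z i • e i)‖ ≤ ‖∑ i ∈ z.support, z i • e i‖
    rw [hDval k z]
    refine monoX hE h𝓕 hX fun i => ?_
    by_cases hik : i = k
    · subst hik; rw [Finsupp.erase_same]; simp
    · rw [Finsupp.erase_ne hik]
  have hDnorm : ∀ k : ℕ, ‖D k‖ ≤ 1 := fun k =>
    ContinuousLinearMap.opNorm_le_bound _ zero_le_one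
      (fun x => by rw [one_mul]; exact hDle k x)
  set J : X →L[𝕜] (↥G → X) := ContinuousLinearMap.pi (fun k : ↥G => D k) with hJ
  have hJle : ∀ x, ‖J x‖ ≤ ‖x‖ := fun x =>
    (pi_norm_le_iff_of_nonneg (norm_nonneg x)).mpr fun k => hDle k x
  have hJge : ∀ x : X, ‖x‖ ≤ ‖J x‖ := by
    have hclosed : IsClosed {x : X | ‖x‖ ≤ ‖J x‖} :=
      isClosed_le continuous_norm (J.continuous.norm)
    refine dense_closed_prop hE h𝓕 hX hclosed fun z => ?_
    show ‖∑ i ∈ z.support, z i • e i‖ ≤ ‖J (∑ i ∈ z.support, z i • e i)‖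
    rw [hX.norm_eq]
    refine csSup_le ⟨_, ∅, empty_mem_fam h𝓕, rfl⟩ ?_
    rintro r ⟨F, hF, rfl⟩
    have hGF : ¬ (G ⊆ F) := fun hsub => hG (h𝓕.2 F hF G hsub)
    obtain ⟨k, hkG, hkF⟩ := Finset.not_subset.mp hGF
    calc ‖∑ i ∈ F, z i • b i‖ = ‖∑ i ∈ F, (z.erase k) i • b i‖ := by
          refine congrArg _ (Finset.sum_congr rfl fun i hi => ?_)
          rw [Finsupp.erase_ne (fun h : i = k => hkF (h ▸ hi))]
      _ ≤ ‖∑ i ∈ (z.erase k).support, (z.erase k) i • e i‖ :=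
          le_normX hE h𝓕 hX _ hF
      _ = ‖D k (∑ i ∈ z.support, z i • e i)‖ := by rw [hDval k z]
      _ ≤ ‖J (∑ i ∈ z.support, z i • e i)‖ :=
          norm_le_pi_norm (J (∑ i ∈ z.support, z i • e i)) ⟨k, hkG⟩
  have hJinj : Function.Injective J := by
    intro x y hxy
    have h1 : ‖x - y‖ ≤ ‖J (x - y)‖ := hJge _
    rw [map_sub, hxy, sub_self, norm_zero] at h1
    exact sub_eq_zero.mp (norm_le_zero_iff.mp h1)
  have hJlinj : Function.Injective (J : X →ₗ[𝕜] (↥G → X)) := hJinj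
  set p : Submodule 𝕜 (↥G → X) := LinearMap.range (J : X →ₗ[𝕜] (↥G → X)) with hp
  set eqv : X ≃ₗ[𝕜] p := LinearEquiv.ofInjective (J : X →ₗ[𝕜] (↥G → X)) hJlinj with heqv
  set φ0 : p →ₗ[𝕜] 𝕜 := (xs : X →ₗ[𝕜] 𝕜) ∘ₗ (eqv.symm : p →ₗ[𝕜] X) with hφ0
  have hφval : ∀ x : X,
      φ0 ⟨J x, LinearMap.mem_range_self (J : X →ₗ[𝕜] (↥G → X)) x⟩ = xs x := by
    intro x
    have h1 : eqv.symm ⟨J x, LinearMap.mem_range_self (J : X →ₗ[𝕜] (↥G → X)) x⟩ = x := by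
      apply hJlinj
      rw [heqv, LinearEquiv.ofInjective_symm_apply]
      rfl
    simp only [hφ0, LinearMap.coe_comp, Function.comp_apply, LinearEquiv.coe_coe]
    rw [h1]
    rfl
  have hφbound : ∀ y : p, ‖φ0 y‖ ≤ 1 * ‖y‖ := by
    rintro ⟨y, hy⟩
    obtain ⟨x, rfl⟩ := hy
    rw [one_mul]
    calc ‖φ0 ⟨J x, LinearMap.mem_range_self (J : X →ₗ[𝕜] (↥G → X)) x⟩‖
        = ‖xs x‖ := by rw [hφval x]
      _ ≤ ‖xs‖ * ‖x‖ := xs.le_opNorm x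
      _ = ‖x‖ := by rw [hxs1, one_mul]
      _ ≤ ‖J x‖ := hJge x
      _ = ‖(⟨J x, LinearMap.mem_range_self (J : X →ₗ[𝕜] (↥G → X)) x⟩ : p)‖ := rfl
  set φ := LinearMap.mkContinuous φ0 1 hφbound with hφ
  obtain ⟨g, hg, hgnorm⟩ := exists_extension_norm_eq p φ
  have hgn : ‖g‖ ≤ 1 := by
    rw [hgnorm, hφ]
    exact LinearMap.mkContinuous_norm_le φ0 zero_le_one hφbound
  have hgJ : ∀ x : X, g (J x) = xs x := by
    intro x
    have h1 := hg ⟨J x, LinearMap.mem_range_self (J : X →ₗ[𝕜] (↥G → X)) x⟩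
    rw [Submodule.coe_mk] at h1
    rw [h1, hφ, LinearMap.mkContinuous_apply, hφval x]
  set f : ↥G → StrongDual 𝕜 X := fun k => (g.comp (singleCLM ↥G 𝕜 X k)).comp (D k) with hf
  have hfsum : ∑ k, f k = xs := by
    refine ContinuousLinearMap.ext fun x => ?_
    rw [ContinuousLinearMap.sum_apply]
    have h1 : ∀ k : ↥G, f k x = g (Pi.single k (D (k : ℕ) x)) := fun k => rfl
    rw [Finset.sum_congr rfl fun k _ => h1 k, ← map_sum]
    have h2 : ∑ k : ↥G, Pi.single k (D (k : ℕ) x) = J x :=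
      Finset.univ_sum_single (J x)
    rw [h2, hgJ]
  have hfnorm : ∀ k : ↥G, ‖f k‖ ≤ ‖g.comp (singleCLM ↥G 𝕜 X k)‖ := by
    intro k
    rw [hf]
    refine (ContinuousLinearMap.opNorm_comp_le _ _).trans ?_
    calc ‖g.comp (singleCLM ↥G 𝕜 X k)‖ * ‖D (k : ℕ)‖
        ≤ ‖g.comp (singleCLM ↥G 𝕜 X k)‖ * 1 :=
          mul_le_mul_of_nonneg_left (hDnorm k) (norm_nonneg _)
      _ = ‖g.comp (singleCLM ↥G 𝕜 X k)‖ := mul_one _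
  have hsum1 : ∑ k, ‖f k‖ = 1 := by
    refine le_antisymm ?_ ?_
    · calc ∑ k, ‖f k‖ ≤ ∑ k, ‖g.comp (singleCLM ↥G 𝕜 X k)‖ :=
            Finset.sum_le_sum fun k _ => hfnorm k
        _ ≤ ‖g‖ := l1_bound g
        _ ≤ 1 := hgn
    · calc (1 : ℝ) = ‖xs‖ := hxs1.symm
        _ = ‖∑ k, f k‖ := by rw [hfsum]
        _ ≤ ∑ k, ‖f k‖ := norm_sum_le _ _
  set s : Finset ↥G := Finset.univ.filter (fun k => f k ≠ 0) with hs
  have hsum_s : ∑ k ∈ s, ‖f k‖ = 1 := by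
    rw [hs, Finset.sum_filter_of_ne (fun k _ hk => by
      intro hzero
      exact hk (by rw [hzero, norm_zero]))]
    exact hsum1
  have happly := extreme_convex_comb (𝕜 := 𝕜) hext s (fun k => ‖f k‖)
    (fun k => ((‖f k‖ : ℝ) : 𝕜)⁻¹ • f k) ?_ hsum_s ?_ ?_
  · -- use the conclusion
    have hex : ∃ k : ↥G, f k ≠ 0 := by
      by_contra hall
      push_neg at hall
      rw [Finset.sum_eq_zero (fun k _ => by rw [hall k, norm_zero])] at hsum1
      norm_num at hsum1
    obtain ⟨k0, hk0⟩ := hex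
    have hk0s : k0 ∈ s := by rw [hs]; simp [hk0]
    have hc0 := happly k0 hk0s
    have hDk0 : D (k0 : ℕ) (e (k0 : ℕ)) = 0 := by
      have h1 : e (k0 : ℕ) = ∑ i ∈ (Finsupp.single (k0 : ℕ) (1:𝕜)).support,
          (Finsupp.single (k0 : ℕ) (1:𝕜)) i • e i := (single_sum e (k0 : ℕ)).symm
      rw [h1, hDval]
      rw [Finsupp.erase_single]
      simp
    have hf0 : f k0 (e (k0 : ℕ)) = 0 := by
      show g (singleCLM ↥G 𝕜 X k0 (D (k0 : ℕ) (e (k0 : ℕ)))) = 0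
      rw [hDk0, map_zero, map_zero]
    have hval0 : xs (e (k0 : ℕ)) = 0 := by
      rw [← hc0]
      rw [ContinuousLinearMap.smul_apply, hf0, smul_zero]
    exact hGsupp k0 k0.2 hval0
  · intro k hk
    rw [hs, Finset.mem_filter] at hk
    exact norm_pos_iff.mpr hk.2
  · intro k hk
    rw [hs, Finset.mem_filter] at hk
    rw [norm_smul, norm_inv, RCLike.norm_ofReal, abs_of_nonneg (norm_nonneg _)]
    rw [inv_mul_cancel₀ (norm_ne_zero_iff.mpr hk.2)]
  · rw [← hfsum, hs]
    rw [Finset.sum_filter_of_ne (fun k _ hk => by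
      intro hzero
      exact hk (by simp [hzero]))]
    refine Finset.sum_congr rfl fun k _ => ?_
    show ((‖f k‖ : ℝ) : 𝕜) • (((‖f k‖ : ℝ) : 𝕜)⁻¹ • f k) = f k
    by_cases hfk : f k = 0
    · rw [hfk]; ext x; simp
    · rw [smul_smul, mul_inv_cancel₀ (by
        simpa [RCLike.ofReal_eq_zero] using norm_ne_zero_iff.mpr hfk), one_smul]

end AuxMain

end

/-- Lemma (ext).  If `E*` is strictly convex, then `x* ∈ X_{𝓕,E}^*` is
an extreme point of the closed unit ball of `X_{𝓕,E}^*` if and only if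
`supp(x*) ∈ 𝓕̄` and `‖𝐱*‖_{E*} = 1`, where `𝐱*` is the functional on `E` with
`𝐱*(𝐞_i) = x*(e_i)` for all `i`. -/
theorem extreme_points_of_dual_ball_XFE
    {𝕜 : Type*} [RCLike 𝕜]
    (E : Type*) [NormedAddCommGroup E] [NormedSpace 𝕜 E] [CompleteSpace E]
    (b : ℕ → E) (bs : ℕ → StrongDual 𝕜 E) (hE : IsNUBasis 𝕜 E b bs)
    (hconv : IsStrictlyConvexSp (StrongDual 𝕜 E))
    (𝓕 : Set (Finset ℕ)) (h𝓕 : IsCombFamily 𝓕)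
    (X : Type*) [NormedAddCommGroup X] [NormedSpace 𝕜 X] [CompleteSpace X]
    (e : ℕ → X) (hX : IsXFE 𝕜 𝓕 E b X e)
    (xs : StrongDual 𝕜 X) (Xs : StrongDual 𝕜 E) (hXs : ∀ i, Xs (b i) = xs (e i)) :
    IsExtremePtBall xs ↔ ({i : ℕ | xs (e i) ≠ 0} ∈ famClosure 𝓕 ∧ ‖Xs‖ = 1) := by
  classical
  constructor
  · intro hext
    have h1 : ‖xs‖ = 1 := extreme_norm_one hE h𝓕 hX xs hext
    have hA : {i : ℕ | xs (e i) ≠ 0} ∈ famClosure 𝓕 := by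
      intro G hG
      exact mem_fam_of_extreme hE h𝓕 hX xs hext G (fun k hk => hG hk)
    refine ⟨hA, le_antisymm ?_ ?_⟩
    · rw [← h1]
      exact Xs_norm_le hE h𝓕 hX xs Xs hXs
    · rw [← h1]
      exact xs_norm_le_Xs hE h𝓕 hX xs Xs hXs hA
  · rintro ⟨hA, hN⟩
    have hxle : ‖xs‖ ≤ 1 := by
      rw [← hN]
      exact xs_norm_le_Xs hE h𝓕 hX xs Xs hXs hA
    refine ⟨hxle, ?_⟩
    intro u v hu hv huv
    obtain ⟨T, hT, hTb⟩ := exists_T hE h𝓕 hX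
    set U : StrongDual 𝕜 E := u.comp T with hU
    set V : StrongDual 𝕜 E := v.comp T with hV
    have hUb : ∀ i, U (b i) = u (e i) := fun i => by
      rw [hU, ContinuousLinearMap.comp_apply, hTb i]
    have hVb : ∀ i, V (b i) = v (e i) := fun i => by
      rw [hV, ContinuousLinearMap.comp_apply, hTb i]
    have hUn : ‖U‖ ≤ 1 := by
      rw [hU]
      refine (ContinuousLinearMap.opNorm_comp_le _ _).trans ?_
      calc ‖u‖ * ‖T‖ ≤ 1 * 1 := mul_le_mul hu hT (norm_nonneg T) zero_le_one
        _ = 1 := one_mul 1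
    have hVn : ‖V‖ ≤ 1 := by
      rw [hV]
      refine (ContinuousLinearMap.opNorm_comp_le _ _).trans ?_
      calc ‖v‖ * ‖T‖ ≤ 1 * 1 := mul_le_mul hv hT (norm_nonneg T) zero_le_one
        _ = 1 := one_mul 1
    -- U + V = Xs + Xs since they agree on a dense subspace
    have hUV : U + V = Xs + Xs := by
      refine ContinuousLinearMap.ext ?_
      have hclosed : IsClosed {w : E | (U + V) w = (Xs + Xs) w} :=
        isClosed_eq (U + V).continuous (Xs + Xs).continuous
      refine dense_closed_prop_E hE hclosed fun z => ?_
      show (U + V) (∑ i ∈ z.support, z i • b i) = (Xs + Xs) (∑ i ∈ z.support, z i • b i)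
      rw [ContinuousLinearMap.add_apply, ContinuousLinearMap.add_apply,
        pairing_eq hE h𝓕 hX u U hUb z, pairing_eq hE h𝓕 hX v V hVb z,
        pairing_eq hE h𝓕 hX xs Xs hXs z]
      have happ := congrArg (fun h : StrongDual 𝕜 X => h (∑ i ∈ z.support, z i • e i)) huv
      simpa [Finset.sum_add_distrib, mul_add] using happ
    have hXsn : ‖U + V‖ = 2 := by
      rw [hUV]
      have h2 : Xs + Xs = (2 : 𝕜) • Xs := (two_smul 𝕜 Xs).symm
      rw [h2, norm_smul, hN, mul_one, RCLike.norm_two]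
    have hUn1 : ‖U‖ = 1 := by
      have h3 : 2 ≤ ‖U‖ + ‖V‖ := by
        rw [← hXsn]
        exact norm_add_le U V
      linarith
    have hVn1 : ‖V‖ = 1 := by
      have h3 : 2 ≤ ‖U‖ + ‖V‖ := by
        rw [← hXsn]
        exact norm_add_le U V
      linarith
    have hUVeq : U = V := by
      by_contra hne
      have := hconv U V hUn1 hVn1 hne
      rw [hXsn] at this
      exact lt_irrefl 2 this
    have hUXs : U = Xs := by
      have h4 : (2 : 𝕜) • U = (2 : 𝕜) • Xs := by
        ext x
        have hUVx := congrArg (fun f : StrongDual 𝕜 E => f x) hUV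
        simp only [ContinuousLinearMap.add_apply] at hUVx
        simp only [ContinuousLinearMap.smul_apply]
        rw [two_smul, two_smul, ← hUVx, hUVeq]
      exact smul_right_injective _ two_ne_zero h4
    have hueq : u = xs := by
      refine ContinuousLinearMap.ext ?_
      have hclosed : IsClosed {x : X | u x = xs x} :=
        isClosed_eq u.continuous xs.continuous
      refine dense_closed_prop hE h𝓕 hX hclosed fun z => ?_
      show u (∑ i ∈ z.support, z i • e i) = xs (∑ i ∈ z.support, z i • e i)
      rw [← pairing_eq hE h𝓕 hX u U hUb z, ← pairing_eq hE h𝓕 hX xs Xs hXs z, hUXs]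
    have hveq : v = xs := by
      have : v = xs + xs - u := by
        rw [← huv]; abel
      rw [this, hueq]; abel
    exact ⟨hueq, hveq⟩

end
end
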